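/- arXiv:1404.4214 — 6 statements merged into one kernel-verified Lean document; each statement's English description precedes it below -/
import Mathlib

section
/- Let k = 4m with m ≥ 1, r an odd positive integer, and n an integer. The number N_k(n,r) of solutions of x_1²+...+x_k² ≡ n (mod r) in (ℤ/rℤ)^k equals r^{k-1} · ∑_{d|r} c_d(n)/d^{k/2}, where c_d(n) is Ramanujan's sum. -/
/-- Ramanujan's sum `c_d(n) = ∑_{1 ≤ j ≤ d, gcd(j,d)=1} exp(2πijn/d)`. -/
noncomputable def ramanujanC (d : ℕ) (n : ℤ) : ℂ :=
  ∑ j ∈ (Finset.Icc 1 d).filter (fun j => Nat.gcd j d = 1),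
    Complex.exp (2 * Real.pi * Complex.I * (j * n / d))

/-!
With `e(x) = exp(2πix/r)` and the quadratic Gauss sum `S(t) = ∑ₓ e(tx²)` over `ZMod r`,
orthogonality of characters gives `r · N_k(n,r) = ∑ₜ e(tn) S(-t)^k`. Shifting `x` by `y` in
`S(t) S(-t) = ∑_{x,y} e(t(x² - y²))` shows `S(t) S(-t) = r · gcd(t, r)` for odd `r`; and since `-1`
is a sum of two squares modulo `r`, a linear change of variables gives `S(-t)² = S(t)²`. Hence
`S(-t)⁴ = (r · gcd(t, r))²`, so for `k = 4m` the summand depends on `t` only through `e(tn)` and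
`gcd(t, r)`, and the `t` with `gcd(t, r) = r / d` are exactly the `j r / d` with `j` a unit
modulo `d`, which produces the Ramanujan sum `c_d(n)`.
-/

open Finset ZMod

theorem ZMod.exists_sq_add_sq_eq_neg_one {r : ℕ} (hr : Odd r) :
    ∃ a b : ZMod r, a ^ 2 + b ^ 2 = -1 := by
  -- a prime `p ≡ 2r - 1 (mod 4r)` is `≡ 1 (mod 4)`, hence a sum of two squares, and `≡ -1 (mod r)`
  obtain ⟨p, -, hp, hpr⟩ := Nat.forall_exists_prime_gt_and_zmodEq 0 (q := 4 * r)
    (a := 2 * r - 1) (by have := hr.pos; omega) ⟨2 * r - 1, -(r - 1), by push_cast; ring⟩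
  push_cast at hpr
  have : Fact p.Prime := ⟨hp⟩
  have hp4 : p % 4 = 1 := by
    have h4 := hpr.of_mul_right r
    obtain ⟨s, rfl⟩ := hr
    unfold Int.ModEq at h4
    push_cast at h4
    omega
  have hp_eq : (p : ZMod r) = -1 := by
    simpa using (ZMod.intCast_eq_intCast_iff _ _ r).mpr (hpr.of_mul_left 4)
  obtain ⟨a, b, hab⟩ := Nat.Prime.sq_add_sq (p := p) (by omega)
  exact ⟨a, b, by rw [← hp_eq, ← hab]; push_cast; rfl⟩

theorem AddChar.map_sum_eq_prod {ι A M : Type*} [AddCommMonoid A] [CommMonoid M]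
    (ψ : AddChar A M) (s : Finset ι) (f : ι → A) : ψ (∑ i ∈ s, f i) = ∏ i ∈ s, ψ (f i) := by
  induction s using Finset.cons_induction with
  | empty => simp
  | cons a s ha ih => rw [sum_cons, prod_cons, map_add_eq_mul, ih]

namespace ZMod

variable {r : ℕ} [NeZero r]

theorem card_mul_eq_zero_of_dvd {g : ℕ} (hg : g ∣ r) :
    #{u : ZMod r | (g : ZMod r) * u = 0} = g := by
  obtain ⟨q, rfl⟩ := hg
  have hq : 0 < q := Nat.pos_of_ne_zero (right_ne_zero_of_mul (NeZero.ne (g * q)))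
  have hg0 : 0 < g := Nat.pos_of_ne_zero (left_ne_zero_of_mul (NeZero.ne (g * q)))
  have hlt : ∀ i < g, q * i < g * q := fun i hi => by nlinarith
  have : ({u : ZMod (g * q) | (g : ZMod (g * q)) * u = 0} : Finset _) =
      (range g).image fun i => ((q * i : ℕ) : ZMod (g * q)) := by
    ext u
    simp only [mem_filter, mem_univ, true_and, mem_image, mem_range]
    constructor
    · intro hu
      have : g * q ∣ g * u.val := by
        rw [← natCast_eq_zero_iff]; simpa using hu
      obtain ⟨i, hi⟩ := Nat.dvd_of_mul_dvd_mul_left hg0 this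
      refine ⟨i, ?_, by rw [← hi, natCast_zmod_val]⟩
      have := u.val_lt
      nlinarith
    · rintro ⟨i, -, rfl⟩
      rw [← Nat.cast_mul, natCast_eq_zero_iff]
      exact ⟨i, by ring⟩
  rw [this, card_image_of_injOn, card_range]
  intro i hi j hj hij
  have := congrArg val hij
  simp only [val_natCast_of_lt (hlt _ (mem_range.mp hi)),
    val_natCast_of_lt (hlt _ (mem_range.mp hj))] at this
  exact Nat.eq_of_mul_eq_mul_left hq this

theorem card_mul_eq_zero (t : ZMod r) : #{u : ZMod r | t * u = 0} = t.val.gcd r := by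
  -- `t` and `gcd(t, r)` divide each other in `ZMod r`, since `t * t⁻¹ = gcd(t, r)`
  obtain ⟨c, hc⟩ := Nat.gcd_dvd_left t.val r
  have ht : t = (t.val.gcd r : ZMod r) * c := by
    rw [← Nat.cast_mul, ← hc, natCast_zmod_val]
  rw [← card_mul_eq_zero_of_dvd (Nat.gcd_dvd_right t.val r)]
  congr 1
  ext u
  simp only [mem_filter, mem_univ, true_and]
  constructor
  · intro h
    rw [← mul_inv_eq_gcd, mul_right_comm, h, zero_mul]
  · intro h
    rw [ht, mul_right_comm, h, zero_mul]

theorem sum_stdAddChar_mul (b : ZMod r) :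
    ∑ x : ZMod r, stdAddChar (x * b) = if b = 0 then (r : ℂ) else 0 := by
  rw [AddChar.sum_mulShift _ (isPrimitive_stdAddChar r), ZMod.card]
  split_ifs <;> simp

theorem natCast_mul_card_eq_sum_stdAddChar {α : Type*} [Fintype α] (Q : α → ZMod r) (c : ZMod r) :
    (r : ℂ) * #{x | Q x = c} = ∑ t : ZMod r, stdAddChar (t * c) * ∑ x, stdAddChar (-t * Q x) := by
  calc (r : ℂ) * #{x | Q x = c}
      = ∑ x, ∑ t : ZMod r, stdAddChar (t * (c - Q x)) := by
        simp only [sum_stdAddChar_mul, sub_eq_zero, eq_comm (a := c), sum_ite, sum_const_zero,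
          add_zero, sum_const, nsmul_eq_mul, mul_comm]
    _ = _ := by
        rw [sum_comm]
        refine Fintype.sum_congr _ _ fun t => ?_
        rw [mul_sum]
        refine Fintype.sum_congr _ _ fun x => ?_
        rw [← AddChar.map_add_eq_mul]
        ring_nf

variable (r) in
noncomputable def quadGaussSum (t : ZMod r) : ℂ := ∑ x : ZMod r, stdAddChar (t * x ^ 2)

theorem sum_stdAddChar_mul_sum_sq {ι : Type*} [Fintype ι] [DecidableEq ι] (t : ZMod r) :
    ∑ x : ι → ZMod r, stdAddChar (t * ∑ i, x i ^ 2) = quadGaussSum r t ^ Fintype.card ι := by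
  simp only [mul_sum, AddChar.map_sum_eq_prod]
  rw [quadGaussSum, ← card_univ, ← prod_const, Fintype.prod_sum]

theorem quadGaussSum_mul_quadGaussSum_neg (hr : Odd r) (t : ZMod r) :
    quadGaussSum r t * quadGaussSum r (-t) = r * t.val.gcd r := by
  have h2 : IsUnit (2 : ZMod r) := by
    simpa using (isUnit_iff_coprime 2 r).mpr (Nat.coprime_two_left.mpr hr)
  calc quadGaussSum r t * quadGaussSum r (-t)
      = ∑ y : ZMod r, ∑ h : ZMod r, stdAddChar (t * (h + y) ^ 2) * stdAddChar (-t * y ^ 2) := by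
        rw [quadGaussSum, quadGaussSum, Fintype.sum_mul_sum, sum_comm]
        exact Fintype.sum_congr _ _ fun y =>
          (Fintype.sum_equiv (Equiv.addRight y) _ _ fun _ => rfl).symm
    _ = ∑ h : ZMod r, stdAddChar (t * h ^ 2) * ∑ y : ZMod r, stdAddChar (y * (2 * t * h)) := by
        rw [sum_comm]
        refine Fintype.sum_congr _ _ fun h => ?_
        rw [mul_sum]
        refine Fintype.sum_congr _ _ fun y => ?_
        rw [← AddChar.map_add_eq_mul, ← AddChar.map_add_eq_mul]
        ring_nf
    _ = ∑ h : ZMod r, if t * h = 0 then (r : ℂ) else 0 := by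
        -- `2` is a unit, and `t h² = h (t h)` vanishes with `t h`
        refine Fintype.sum_congr _ _ fun h => ?_
        rw [sum_stdAddChar_mul, mul_assoc]
        by_cases hth : t * h = 0
        · rw [if_pos (by rw [hth, mul_zero]), if_pos hth, pow_two, ← mul_assoc, hth, zero_mul,
            AddChar.map_zero_eq_one, one_mul]
        · rw [if_neg (h2.mul_right_eq_zero.not.mpr hth), if_neg hth, mul_zero]
    _ = r * t.val.gcd r := by
        rw [sum_ite, sum_const_zero, add_zero, sum_const, card_mul_eq_zero,
          nsmul_eq_mul, mul_comm]

theorem quadGaussSum_sq (t : ZMod r) :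
    quadGaussSum r t ^ 2 = ∑ p : ZMod r × ZMod r, stdAddChar (t * (p.1 ^ 2 + p.2 ^ 2)) := by
  rw [sq, quadGaussSum, Fintype.sum_mul_sum, Fintype.sum_prod_type]
  simp only [← AddChar.map_add_eq_mul, mul_add]

theorem quadGaussSum_neg_sq (hr : Odd r) (t : ZMod r) :
    quadGaussSum r (-t) ^ 2 = quadGaussSum r t ^ 2 := by
  obtain ⟨a, b, hab⟩ := exists_sq_add_sq_eq_neg_one hr
  -- `φ` multiplies `x² + y²` by `a² + b² = -1`
  let φ : ZMod r × ZMod r → ZMod r × ZMod r := fun p => (a * p.1 + b * p.2, b * p.1 - a * p.2)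
  have hφφ : ∀ p, φ (φ p) = -p := fun p => by
    ext <;> simp only [Prod.fst_neg, Prod.snd_neg]
    · linear_combination p.1 * hab
    · linear_combination p.2 * hab
  have hφ : Function.Bijective φ := by
    refine ⟨fun p q hpq => neg_injective ?_, fun p => ⟨φ (-p), by rw [hφφ, neg_neg]⟩⟩
    rw [← hφφ, ← hφφ, hpq]
  rw [quadGaussSum_sq, quadGaussSum_sq]
  refine Fintype.sum_bijective φ hφ _ _ fun p => congrArg stdAddChar ?_
  linear_combination (-t * (p.1 ^ 2 + p.2 ^ 2)) * hab

theorem quadGaussSum_neg_pow_four (hr : Odd r) (t : ZMod r) :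
    quadGaussSum r (-t) ^ 4 = (r * t.val.gcd r : ℂ) ^ 2 := by
  rw [← quadGaussSum_mul_quadGaussSum_neg hr, mul_pow, ← quadGaussSum_neg_sq hr, ← pow_add]

theorem gcd_val_natCast_mul_div {d j : ℕ} (hd : d ∣ r) (hj : j.Coprime d) :
    ((j * (r / d) : ℕ) : ZMod r).val.gcd r = r / d := by
  obtain ⟨q, rfl⟩ := hd
  have hd : 0 < d := Nat.pos_of_ne_zero (left_ne_zero_of_mul (NeZero.ne (d * q)))
  rw [Nat.mul_div_cancel_left q hd, val_natCast, ← Nat.gcd_rec, Nat.gcd_comm, Nat.gcd_mul_right,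
    hj, one_mul]

theorem exists_coprime_natCast_mul_div_eq {d : ℕ} (hd : d ∣ r) {t : ZMod r}
    (ht : t.val.gcd r = r / d) : ∃ j ∈ Icc 1 d, j.Coprime d ∧ ((j * (r / d) : ℕ) : ZMod r) = t := by
  obtain ⟨q, rfl⟩ := hd
  have hd : 0 < d := Nat.pos_of_ne_zero (left_ne_zero_of_mul (NeZero.ne (d * q)))
  have hq : 0 < q := Nat.pos_of_ne_zero (right_ne_zero_of_mul (NeZero.ne (d * q)))
  rw [Nat.mul_div_cancel_left q hd] at ht ⊢
  obtain ⟨j, hj⟩ := Nat.gcd_dvd_left t.val (d * q)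
  rw [ht] at hj
  rw [hj, mul_comm q, Nat.gcd_mul_right, mul_eq_right₀ hq.ne'] at ht
  rcases j.eq_zero_or_pos with rfl | hj0
  · obtain rfl : d = 1 := by simpa using ht
    obtain rfl : t = 0 := (val_eq_zero t).mp (by simpa using hj)
    exact ⟨1, by simp, by simp [natCast_eq_zero_iff]⟩
  · have hjd : j < d := by
      have := t.val_lt
      rw [hj, mul_comm] at this
      exact Nat.lt_of_mul_lt_mul_right this
    refine ⟨j, mem_Icc.mpr ⟨hj0, hjd.le⟩, ht, ?_⟩
    rw [← natCast_zmod_val t, hj, Nat.mul_comm q j]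

theorem sum_stdAddChar_filter_gcd_val_eq_ramanujanC {d : ℕ} (hd : d ∣ r) (n : ℤ) :
    ∑ t : ZMod r with t.val.gcd r = r / d, stdAddChar (t * (n : ZMod r)) = ramanujanC d n := by
  have hd0 : 0 < d := Nat.pos_of_dvd_of_pos hd (NeZero.pos r)
  have hq : 0 < r / d := Nat.div_pos (Nat.le_of_dvd (NeZero.pos r) hd) hd0
  symm
  refine sum_nbij (fun j => ((j * (r / d) : ℕ) : ZMod r)) (fun j hj => ?_)
    (fun j hj j' hj' hjj' => ?_) (fun t ht => ?_) (fun j _ => ?_)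
  · simpa using gcd_val_natCast_mul_div hd (mem_filter.mp hj).2
  · simp only [mem_coe, mem_filter, mem_Icc] at hj hj'
    have hmod : j * (r / d) ≡ j' * (r / d) [MOD d * (r / d)] := by
      rw [Nat.mul_div_cancel' hd]
      exact (natCast_eq_natCast_iff _ _ _).mp hjj'
    refine (hmod.mul_right_cancel' hq.ne').eq_of_abs_lt ?_
    rw [abs_lt]
    omega
  · obtain ⟨j, hj, hjd, rfl⟩ := exists_coprime_natCast_mul_div_eq hd (by simpa using ht)
    exact ⟨j, mem_filter.mpr ⟨hj, hjd⟩, rfl⟩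
  · rw [show ((j * (r / d) : ℕ) : ZMod r) * (n : ZMod r) = (((j * (r / d) : ℕ) * n : ℤ) : ZMod r) by
      rw [Int.cast_mul, Int.cast_natCast], stdAddChar_coe]
    have hdC : (d : ℂ) ≠ 0 := by exact_mod_cast hd0.ne'
    have hrC : (r : ℂ) ≠ 0 := by exact_mod_cast NeZero.ne r
    rw [Int.cast_mul, Int.cast_natCast, Nat.cast_mul, Nat.cast_div hd hdC]
    field_simp

theorem sum_stdAddChar_mul_gcd_val_eq_sum_divisors (n : ℤ) (F : ℕ → ℂ) :
    ∑ t : ZMod r, stdAddChar (t * (n : ZMod r)) * F (t.val.gcd r) =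
      ∑ d ∈ r.divisors, ramanujanC d n * F (r / d) := by
  have hgcd : ∀ t ∈ (univ : Finset (ZMod r)), t.val.gcd r ∈ r.divisors := fun t _ =>
    Nat.mem_divisors.mpr ⟨Nat.gcd_dvd_right _ _, NeZero.ne r⟩
  rw [← sum_fiberwise_of_maps_to hgcd, ← Nat.sum_div_divisors r]
  refine sum_congr rfl fun d hd => ?_
  rw [← sum_stdAddChar_filter_gcd_val_eq_ramanujanC (Nat.dvd_of_mem_divisors hd), sum_mul]
  exact sum_congr rfl fun t ht => by rw [(mem_filter.mp ht).2]

end ZMod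

theorem count_sum_of_squares_4m_general (m r : ℕ) (hm : 0 < m) (hodd : Odd r) (n : ℤ) :
    (Nat.card {x : Fin (4 * m) → ZMod r // ∑ i, (x i) ^ 2 = (n : ZMod r)} : ℂ) =
      (r : ℂ) ^ (4 * m - 1) * ∑ d ∈ r.divisors, ramanujanC d n / (d : ℂ) ^ (2 * m) := by
  have : NeZero r := ⟨hodd.pos.ne'⟩
  have hS (t : ZMod r) : quadGaussSum r (-t) ^ (4 * m) = (r * t.val.gcd r : ℂ) ^ (2 * m) := by
    rw [pow_mul, quadGaussSum_neg_pow_four hodd, ← pow_mul]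
  apply mul_left_cancel₀ (Nat.cast_ne_zero.mpr (NeZero.ne r) : (r : ℂ) ≠ 0)
  rw [Nat.card_eq_fintype_card, Fintype.card_subtype, natCast_mul_card_eq_sum_stdAddChar]
  simp only [sum_stdAddChar_mul_sum_sq, Fintype.card_fin, hS]
  rw [sum_stdAddChar_mul_gcd_val_eq_sum_divisors n fun g => (r * g : ℂ) ^ (2 * m), ← mul_assoc,
    ← pow_succ', Nat.sub_add_cancel (by omega), mul_sum]
  refine sum_congr rfl fun d hd => ?_
  have hd' : (d : ℂ) ≠ 0 := Nat.cast_ne_zero.mpr (Nat.pos_of_mem_divisors hd).ne'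
  rw [Nat.cast_div (Nat.dvd_of_mem_divisors hd) hd', mul_pow, div_pow]
  ring

theorem count_sum_of_squares_4m (m r : ℕ) (hm : 0 < m) (hr : 0 < r) (hodd : Odd r) (n : ℤ) :
    (Nat.card {x : Fin (4 * m) → ZMod r // ∑ i, (x i) ^ 2 = (n : ZMod r)} : ℂ) =
      (r : ℂ) ^ (4 * m - 1) * ∑ d ∈ r.divisors, ramanujanC d n / (d : ℂ) ^ (2 * m) :=
  count_sum_of_squares_4m_general m r hm hodd n
end

section
/- Let k = 4m with m ≥ 1, r an odd positive integer, and n an integer. Then N_k(n,r) = r^{2m-1} · ∑_{d | gcd(n,r)} d · J_{2m}(r/d), where J_s is the Jordan totient function of order s. (When n = 0, the sum is over all d | r.) -/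
/-!
Since `r` is odd, Dirichlet's theorem gives a prime `q ≡ -1 (mod r)` with `q ≡ 1 (mod 4)`, so by
Fermat `-1 = s² + t²` in `ℤ/rℤ`. With `2` invertible, the substitutions `(c, d) ↦ (sc + td, tc - sd)`
(which negates `c² + d²`) and `(a, c) ↦ (a - c, a + c)` turn a sum of `4m` squares into the
hyperbolic form `u ⬝ v` on pairs of vectors of length `k = 2m`.

For fixed `u`, the map `v ↦ u ⬝ v` is a homomorphism onto the multiples of the content
`g = gcd(r, u₁, …, u_k)`, so `u ⬝ v = n` has `g r^(k-1)` solutions if `g ∣ gcd(n, r)` and none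
otherwise. Vectors of content `d` are `d` times the unimodular vectors modulo `r / d`, and unimodular
vectors modulo `s` number `J_k(s)`: the count is multiplicative by the Chinese remainder theorem and
equals `p^(ak) - p^((a-1)k)` at `s = p^a`.
-/

/-- The Jordan totient function `J_s(n) = n^s ∏_{p ∣ n} (1 - 1/p^s)`. -/
noncomputable def jordanTotient (s n : ℕ) : ℝ :=
  (n : ℝ) ^ s * ∏ p ∈ n.primeFactors, (1 - 1 / (p : ℝ) ^ s)

open Finset

namespace ZMod

lemma exists_sq_add_sq_eq_neg_one_s8 {r : ℕ} (hr : Odd r) :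
    ∃ s t : ZMod r, s ^ 2 + t ^ 2 = -1 := by
  obtain ⟨j, rfl⟩ := hr
  -- `4j + 1 = 2r - 1` is `≡ 1 (mod 4)` and `≡ -1 (mod r)`
  have hcop : IsCoprime (4 * j + 1 : ℤ) (4 * (2 * j + 1) : ℕ) :=
    ⟨4 * j + 1, -2 * j, by push_cast; ring⟩
  obtain ⟨q, -, hprime, hqr⟩ := Nat.forall_exists_prime_gt_and_zmodEq 0 (by omega) hcop
  push_cast at hqr
  have : Fact q.Prime := ⟨hprime⟩
  obtain ⟨a, b, hab⟩ := Nat.Prime.sq_add_sq (p := q) (by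
    have := hqr.of_mul_right (2 * j + 1)
    unfold Int.ModEq at this
    omega)
  refine ⟨a, b, ?_⟩
  have hq : (q : ZMod (2 * j + 1)) = 2 * (2 * j + 1 : ℕ) - 1 := by
    have := (intCast_eq_intCast_iff_dvd_sub _ _ _).2 (hqr.of_mul_left 4).symm.dvd
    push_cast at this ⊢
    linear_combination -this
  rw [natCast_self, mul_zero, zero_sub] at hq
  exact_mod_cast hab ▸ hq

end ZMod

section QuadraticForms

variable {R : Type*} [CommRing R] {ι : Type*}

def negSqRot (s t : R) (x : ι ⊕ ι → R) : ι ⊕ ι → R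
  | .inl i => s * x (.inl i) + t * x (.inr i)
  | .inr i => t * x (.inl i) - s * x (.inr i)

lemma sum_negSqRot_sq [Fintype ι] (s t : R) (x : ι ⊕ ι → R) :
    ∑ i, negSqRot s t x i ^ 2 = (s ^ 2 + t ^ 2) * ∑ i, x i ^ 2 := by
  simp only [Fintype.sum_sum_type, negSqRot, mul_add, mul_sum, ← sum_add_distrib]
  exact sum_congr rfl fun i _ => by ring

lemma negSqRot_neg_negSqRot {s t : R} (hst : s ^ 2 + t ^ 2 = -1) (x : ι ⊕ ι → R) :
    negSqRot (-s) (-t) (negSqRot s t x) = x := by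
  funext i
  rcases i with i | i <;> simp only [negSqRot]
  · linear_combination (-x (.inl i)) * hst
  · linear_combination (-x (.inr i)) * hst

def negSqRotEquiv {s t : R} (hst : s ^ 2 + t ^ 2 = -1) : (ι ⊕ ι → R) ≃ (ι ⊕ ι → R) where
  toFun := negSqRot s t
  invFun := negSqRot (-s) (-t)
  left_inv := negSqRot_neg_negSqRot hst
  right_inv x := by
    simpa using negSqRot_neg_negSqRot (s := -s) (t := -t) (by linear_combination hst) x

def subAddEquiv {κ : Type*} [Invertible (2 : R)] : (κ → R) × (κ → R) ≃ (κ → R) × (κ → R) where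
  toFun p := (p.1 - p.2, p.1 + p.2)
  invFun p := (⅟(2 : R) • (p.2 + p.1), ⅟(2 : R) • (p.2 - p.1))
  left_inv p := by
    ext i <;> simp only [Pi.smul_apply, Pi.add_apply, Pi.sub_apply, smul_eq_mul]
    · linear_combination (p.1 i) * mul_invOf_self (2 : R)
    · linear_combination (p.2 i) * mul_invOf_self (2 : R)
  right_inv p := by
    ext i <;> simp only [Pi.smul_apply, Pi.add_apply, Pi.sub_apply, smul_eq_mul]
    · linear_combination (p.1 i) * mul_invOf_self (2 : R)
    · linear_combination (p.2 i) * mul_invOf_self (2 : R)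

lemma sum_sub_mul_add {κ : Type*} [Fintype κ] (a c : κ → R) :
    ∑ i, (a i - c i) * (a i + c i) = ∑ i, a i ^ 2 - ∑ i, c i ^ 2 := by
  rw [← sum_sub_distrib]
  exact sum_congr rfl fun i _ => by ring

lemma card_sum_sq_eq_card_dotProduct [Fintype ι] [Invertible (2 : R)] {s t : R}
    (hst : s ^ 2 + t ^ 2 = -1) (c : R) :
    Nat.card {x : (ι ⊕ ι) ⊕ (ι ⊕ ι) → R // ∑ i, x i ^ 2 = c} =
      Nat.card {p : (ι ⊕ ι → R) × (ι ⊕ ι → R) // p.1 ⬝ᵥ p.2 = c} := by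
  let E := (Equiv.sumArrowEquivProdArrow (ι ⊕ ι) (ι ⊕ ι) R).trans
    ((Equiv.prodCongr (Equiv.refl _) (negSqRotEquiv hst)).trans subAddEquiv)
  refine Nat.card_congr (E.subtypeEquiv fun x => ?_)
  have : (E x).1 ⬝ᵥ (E x).2 = ∑ i, x i ^ 2 := by
    simp only [E, dotProduct, Equiv.trans_apply, Equiv.prodCongr_apply, Prod.map, subAddEquiv,
      negSqRotEquiv, Equiv.coe_fn_mk, Equiv.refl_apply, Equiv.sumArrowEquivProdArrow_apply_fst,
      Pi.sub_apply, Pi.add_apply]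
    rw [sum_sub_mul_add, sum_negSqRot_sq, hst, Fintype.sum_sum_type (fun i => x i ^ 2)]
    simp only [Equiv.sumArrowEquivProdArrow_apply_snd]
    ring
  rw [this]

lemma card_sum_sq_congr {κ κ' : Type*} [Fintype κ] [Fintype κ'] (e : κ ≃ κ') (c : R) :
    Nat.card {x : κ → R // ∑ i, x i ^ 2 = c} = Nat.card {x : κ' → R // ∑ i, x i ^ 2 = c} :=
  Nat.card_congr <| (e.arrowCongr (Equiv.refl R)).subtypeEquiv fun x => by
    rw [← e.symm.sum_comp]
    rfl

end QuadraticForms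

section Unimodular

variable {ι : Type*} [Fintype ι] {R S : Type*} [CommSemiring R] [CommSemiring S]

def IsUnimodular (u : ι → R) : Prop := ∃ v, u ⬝ᵥ v = 1

lemma IsUnimodular.map {u : ι → R} (h : IsUnimodular u) (f : R →+* S) : IsUnimodular (f ∘ u) :=
  let ⟨v, hv⟩ := h
  ⟨f ∘ v, by rw [← RingHom.map_dotProduct, hv, map_one]⟩

lemma isUnimodular_prod_iff (u : ι → R × S) :
    IsUnimodular u ↔ IsUnimodular (Prod.fst ∘ u) ∧ IsUnimodular (Prod.snd ∘ u) := by
  refine ⟨fun h => ⟨h.map (RingHom.fst R S), h.map (RingHom.snd R S)⟩, ?_⟩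
  rintro ⟨⟨v, hv⟩, ⟨w, hw⟩⟩
  refine ⟨fun i => (v i, w i), Prod.ext ?_ ?_⟩
  · simpa [dotProduct, Prod.fst_sum] using hv
  · simpa [dotProduct, Prod.snd_sum] using hw

lemma card_isUnimodular_prod :
    Nat.card {u : ι → R × S // IsUnimodular u} =
      Nat.card {u : ι → R // IsUnimodular u} * Nat.card {u : ι → S // IsUnimodular u} := by
  rw [← Nat.card_prod]
  exact Nat.card_congr (((Equiv.arrowProdEquivProdArrow _ _ _).subtypeEquiv
    isUnimodular_prod_iff).trans Equiv.subtypeProdEquivProd)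

lemma card_isUnimodular_congr (e : R ≃+* S) :
    Nat.card {u : ι → R // IsUnimodular u} = Nat.card {u : ι → S // IsUnimodular u} :=
  Nat.card_congr <| (Equiv.piCongrRight fun _ => e.toEquiv).subtypeEquiv fun u =>
    ⟨fun h => h.map e.toRingHom, fun h => by simpa [Function.comp_def] using h.map e.symm.toRingHom⟩

end Unimodular

lemma jordanTotient_one (k : ℕ) : jordanTotient k 1 = 1 := by
  simp [jordanTotient]

lemma jordanTotient_mul {a b : ℕ} (hab : a.Coprime b) (k : ℕ) :
    jordanTotient k (a * b) = jordanTotient k a * jordanTotient k b := by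
  rw [jordanTotient, hab.primeFactors_mul, prod_union hab.disjoint_primeFactors, Nat.cast_mul,
    mul_pow]
  simp only [jordanTotient]
  ring

lemma jordanTotient_prime_pow {p a : ℕ} (hp : p.Prime) (ha : 0 < a) (k : ℕ) :
    jordanTotient k (p ^ a) = (p : ℝ) ^ (a * k) - (p : ℝ) ^ ((a - 1) * k) := by
  have hp0 : (p : ℝ) ^ k ≠ 0 := pow_ne_zero k (by exact_mod_cast hp.ne_zero)
  obtain ⟨b, rfl⟩ := Nat.exists_eq_add_of_lt ha
  rw [jordanTotient, Nat.primeFactors_prime_pow ha.ne' hp, prod_singleton, Nat.cast_pow, ← pow_mul, Nat.add_sub_cancel, add_mul, one_mul, pow_add]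
  field_simp

namespace ZMod

lemma natCast_dvd_intCast_iff {g r : ℕ} (hg : g ∣ r) (n : ℤ) :
    (g : ZMod r) ∣ (n : ZMod r) ↔ g ∣ Int.gcd n r := by
  have hgr : (g : ℤ) ∣ r := Int.natCast_dvd_natCast.2 hg
  rw [← Int.natCast_dvd_natCast, Int.dvd_coe_gcd_iff, and_iff_left hgr]
  constructor
  · rintro ⟨w, hw⟩
    have : (r : ℤ) ∣ g * (w.cast : ℤ) - n := by
      rw [← intCast_eq_intCast_iff_dvd_sub]
      push_cast
      exact hw
    simpa using (hgr.trans this).sub (dvd_mul_right (g : ℤ) w.cast)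
  · rintro ⟨k, rfl⟩
    exact ⟨k, by push_cast; rfl⟩

lemma val_natCast_mul_val {d q r : ℕ} [NeZero r] (hdq : d * q = r) (w : ZMod q) :
    ((d * w.val : ℕ) : ZMod r).val = d * w.val := by
  have : NeZero q := ⟨right_ne_zero_of_mul (hdq ▸ NeZero.ne r)⟩
  have hd : 0 < d := Nat.pos_of_ne_zero (left_ne_zero_of_mul (hdq ▸ NeZero.ne r))
  exact val_natCast_of_lt (hdq ▸ Nat.mul_lt_mul_of_pos_left w.val_lt hd)

def equivDvdVal {d q r : ℕ} [NeZero r] (hdq : d * q = r) :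
    ZMod q ≃ {x : ZMod r // d ∣ x.val} where
  toFun w := ⟨(d * w.val : ℕ), by rw [val_natCast_mul_val hdq]; exact dvd_mul_right _ _⟩
  invFun x := (x.1.val / d : ℕ)
  left_inv w := by
    have : NeZero q := ⟨right_ne_zero_of_mul (hdq ▸ NeZero.ne r)⟩
    dsimp only
    rw [val_natCast_mul_val hdq, Nat.mul_div_cancel_left _
      (Nat.pos_of_ne_zero (left_ne_zero_of_mul (hdq ▸ NeZero.ne r))), natCast_zmod_val]
  right_inv x := by
    have hlt : x.1.val / d < q := Nat.div_lt_of_lt_mul (hdq ▸ x.1.val_lt)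
    ext
    simp only [val_natCast_of_lt hlt, Nat.mul_div_cancel' x.2, natCast_zmod_val]

lemma card_dvd_val {d q r : ℕ} [NeZero r] (hdq : d * q = r) :
    Nat.card {x : ZMod r // d ∣ x.val} = q := by
  have : NeZero q := ⟨right_ne_zero_of_mul (hdq ▸ NeZero.ne r)⟩
  rw [← Nat.card_congr (equivDvdVal hdq), Nat.card_zmod]

section Content

variable {ι : Type*} [Fintype ι] {r : ℕ}

def content (u : ι → ZMod r) : ℕ := Int.gcd (univ.gcd fun i => ((u i).val : ℤ)) r

lemma content_dvd (u : ι → ZMod r) : content u ∣ r := by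
  exact_mod_cast Int.gcd_dvd_right (univ.gcd fun i => ((u i).val : ℤ)) r

lemma content_dvd_val (u : ι → ZMod r) (i : ι) : content u ∣ (u i).val := by
  exact_mod_cast (Int.gcd_dvd_left _ _).trans
    (gcd_dvd (f := fun i => ((u i).val : ℤ)) (mem_univ i))

lemma natCast_content_dvd [NeZero r] (u : ι → ZMod r) (i : ι) : (content u : ZMod r) ∣ u i := by
  simpa using map_dvd (Nat.castRingHom (ZMod r)) (content_dvd_val u i)

lemma exists_dotProduct_eq_content [NeZero r] (u : ι → ZMod r) :
    ∃ v, u ⬝ᵥ v = content u := by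
  obtain ⟨g, hg⟩ := Finset.gcd_eq_sum_mul univ fun i => ((u i).val : ℤ)
  set G := univ.gcd fun i => ((u i).val : ℤ)
  refine ⟨fun i => ((g i * G.gcdA r : ℤ) : ZMod r), ?_⟩
  have hG : (G : ZMod r) = ∑ i, u i * g i := by
    rw [hg]
    push_cast [natCast_zmod_val]
    rfl
  have := congrArg (Int.cast : ℤ → ZMod r) (Int.gcd_eq_gcd_ab G r)
  push_cast [natCast_self, zero_mul, add_zero, hG, sum_mul] at this
  rw [content, this, dotProduct]
  exact sum_congr rfl fun i _ => by push_cast; ring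

lemma exists_dotProduct_eq_iff [NeZero r] (u : ι → ZMod r) (c : ZMod r) :
    (∃ v, u ⬝ᵥ v = c) ↔ (content u : ZMod r) ∣ c := by
  constructor
  · rintro ⟨v, rfl⟩
    exact dvd_sum fun i _ => (natCast_content_dvd u i).mul_right _
  · rintro ⟨w, rfl⟩
    obtain ⟨v, hv⟩ := exists_dotProduct_eq_content u
    exact ⟨w • v, by rw [dotProduct_smul, hv, smul_eq_mul, mul_comm]⟩

lemma range_dotProduct_eq_zmultiples [NeZero r] (u : ι → ZMod r) :
    (AddMonoidHom.mk' (u ⬝ᵥ ·) (dotProduct_add u)).range =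
      AddSubgroup.zmultiples (content u : ZMod r) := by
  ext c
  rw [AddMonoidHom.mem_range, AddMonoidHom.mk'_apply, exists_dotProduct_eq_iff,
    AddSubgroup.mem_zmultiples_iff]
  constructor
  · rintro ⟨w, rfl⟩
    exact ⟨w.cast, by rw [zsmul_eq_mul, intCast_zmod_cast, mul_comm]⟩
  · rintro ⟨k, rfl⟩
    exact ⟨k, by rw [zsmul_eq_mul, mul_comm]⟩

lemma card_dotProduct_eq_of_dvd [NeZero r] [Nonempty ι] (u : ι → ZMod r) {c : ZMod r}
    (hc : (content u : ZMod r) ∣ c) :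
    Nat.card {v // u ⬝ᵥ v = c} = content u * r ^ (Fintype.card ι - 1) := by
  set f := AddMonoidHom.mk' (u ⬝ᵥ ·) (dotProduct_add u)
  obtain ⟨v₀, rfl⟩ := (exists_dotProduct_eq_iff u c).2 hc
  have hfiber : Nat.card {v // u ⬝ᵥ v = u ⬝ᵥ v₀} = Nat.card f.ker :=
    Nat.card_congr (f.fiberEquivKer v₀)
  have hker : Nat.card f.ker * (r / content u) = r ^ Fintype.card ι := by
    have := f.ker.card_mul_index
    rwa [AddSubgroup.index_ker, range_dotProduct_eq_zmultiples, Nat.card_zmultiples,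
      addOrderOf_coe _ (NeZero.ne r), Nat.gcd_eq_right (content_dvd u), Nat.card_fun,
      Nat.card_zmod, Nat.card_eq_fintype_card (α := ι)] at this
  have hpos : 0 < r / content u :=
    Nat.div_pos (Nat.le_of_dvd (NeZero.pos r) (content_dvd u))
      (Nat.pos_of_dvd_of_pos (content_dvd u) (NeZero.pos r))
  rw [hfiber]
  refine Nat.eq_of_mul_eq_mul_right hpos (hker.trans ?_)
  rw [mul_right_comm, Nat.mul_div_cancel' (content_dvd u), ← pow_succ', Nat.sub_add_cancel
    Fintype.card_pos]

lemma card_dotProduct_eq_intCast [NeZero r] [Nonempty ι] (u : ι → ZMod r) (n : ℤ) :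
    Nat.card {v // u ⬝ᵥ v = n} =
      if content u ∣ Int.gcd n r then content u * r ^ (Fintype.card ι - 1) else 0 := by
  by_cases h : content u ∣ Int.gcd n r
  · rw [if_pos h]
    exact card_dotProduct_eq_of_dvd u ((natCast_dvd_intCast_iff (content_dvd u) n).2 h)
  · rw [if_neg h]
    rw [← natCast_dvd_intCast_iff (content_dvd u)] at h
    have : IsEmpty {v // u ⬝ᵥ v = n} := ⟨fun v => h ((exists_dotProduct_eq_iff u _).1 ⟨v, v.2⟩)⟩
    exact Nat.card_of_isEmpty

lemma card_dotProduct_pairs_eq_sum_card_content [NeZero r] [Nonempty ι] (n : ℤ) :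
    Nat.card {p : (ι → ZMod r) × (ι → ZMod r) // p.1 ⬝ᵥ p.2 = n} =
      ∑ d ∈ (Int.gcd n r).divisors,
        Nat.card {u : ι → ZMod r // content u = d} * (d * r ^ (Fintype.card ι - 1)) := by
  classical
  have hg : Int.gcd n r ≠ 0 := Int.gcd_ne_zero_right (by exact_mod_cast NeZero.ne r)
  have hsplit (u : ι → ZMod r) : (if content u ∣ Int.gcd n r then
      content u * r ^ (Fintype.card ι - 1) else 0) = ∑ d ∈ (Int.gcd n r).divisors,
        if content u = d then d * r ^ (Fintype.card ι - 1) else 0 := by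
    simp only [sum_ite_eq, Nat.mem_divisors, and_iff_left hg]
  rw [Nat.card_congr (Equiv.subtypeProdEquivSigmaSubtype fun u v => u ⬝ᵥ v = (n : ZMod r)),
    Nat.card_sigma]
  simp_rw [card_dotProduct_eq_intCast, hsplit]
  rw [sum_comm]
  refine sum_congr rfl fun d _ => ?_
  rw [← sum_filter, sum_const, smul_eq_mul, Nat.card_eq_fintype_card, Fintype.card_subtype]

lemma content_equivDvdVal [NeZero r] {d q : ℕ} (hdq : d * q = r) (w : ι → ZMod q) :
    content (fun i => (equivDvdVal hdq (w i)).1) = d * content w := by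
  have hval (i : ι) : ((equivDvdVal hdq (w i)).1.val : ℤ) = d * (w i).val := by
    exact_mod_cast val_natCast_mul_val hdq (w i)
  simp only [content, hval, Finset.gcd_mul_left, Int.normalize_of_nonneg (Int.natCast_nonneg d),
    ← hdq, Nat.cast_mul, Int.gcd_mul_left, Int.natAbs_natCast]

lemma card_content_eq [NeZero r] {d q : ℕ} (hdq : d * q = r) :
    Nat.card {u : ι → ZMod r // content u = d} = Nat.card {w : ι → ZMod q // content w = 1} := by
  have hd : d ≠ 0 := left_ne_zero_of_mul (hdq ▸ NeZero.ne r)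
  let E := (Equiv.piCongrRight fun _ : ι => equivDvdVal hdq).trans Equiv.subtypePiEquivPi.symm
  refine (Nat.card_congr <| (E.subtypeEquiv fun w => ?_).trans <|
    Equiv.subtypeSubtypeEquivSubtype fun {u} (hu : content u = d) i =>
      hu ▸ content_dvd_val u i).symm
  change _ ↔ content (fun i => (equivDvdVal hdq (w i)).1) = d
  rw [content_equivDvdVal, Nat.mul_eq_left hd]

lemma content_eq_one_iff [NeZero r] (u : ι → ZMod r) : content u = 1 ↔ IsUnimodular u := by
  rw [IsUnimodular, exists_dotProduct_eq_iff, ← Int.cast_one,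
    natCast_dvd_intCast_iff (content_dvd u), Int.gcd_one_left, Nat.dvd_one]

lemma content_eq_one_iff_of_prime_pow {p a : ℕ} (hp : p.Prime) (ha : 0 < a)
    (u : ι → ZMod (p ^ a)) : content u = 1 ↔ ¬ ∀ i, p ∣ (u i).val := by
  rw [content, ← Int.isCoprime_iff_gcd_eq_one, Nat.cast_pow, IsCoprime.pow_right_iff ha,
    isCoprime_comm, Prime.coprime_iff_not_dvd (Nat.prime_iff_prime_int.1 hp), Finset.dvd_gcd_iff]
  simp [Int.natCast_dvd_natCast]

lemma card_isUnimodular_prime_pow {p a : ℕ} (hp : p.Prime) (ha : 0 < a) :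
    Nat.card {u : ι → ZMod (p ^ a) // IsUnimodular u} =
      p ^ (a * Fintype.card ι) - p ^ ((a - 1) * Fintype.card ι) := by
  classical
  have : NeZero (p ^ a) := ⟨pow_ne_zero a hp.ne_zero⟩
  have hcompl : Nat.card {u : ι → ZMod (p ^ a) // ¬ IsUnimodular u} =
      p ^ ((a - 1) * Fintype.card ι) := by
    simp_rw [← content_eq_one_iff, content_eq_one_iff_of_prime_pow hp ha, not_not]
    rw [Nat.card_congr (Equiv.subtypePiEquivPi (p := fun _ (x : ZMod (p ^ a)) => p ∣ x.val)),
      Nat.card_pi]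
    simp_rw [card_dvd_val (d := p) (q := p ^ (a - 1)) (by rw [← pow_succ', Nat.sub_add_cancel ha])]
    rw [prod_const, card_univ, pow_mul]
  have htotal := Nat.card_congr (Equiv.sumCompl fun u : ι → ZMod (p ^ a) => IsUnimodular u)
  rw [Nat.card_sum, hcompl, Nat.card_fun, Nat.card_zmod, Nat.card_eq_fintype_card (α := ι),
    ← pow_mul] at htotal
  omega

lemma card_isUnimodular {s : ℕ} (hs : 0 < s) :
    (Nat.card {u : ι → ZMod s // IsUnimodular u} : ℝ) = jordanTotient (Fintype.card ι) s := by
  induction s using Nat.recOnPosPrimePosCoprime with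
  | zero => exact absurd hs (lt_irrefl 0)
  | one =>
    rw [jordanTotient_one, Nat.cast_eq_one, Nat.card_eq_one_iff_unique]
    exact ⟨inferInstance, ⟨⟨0, 0, Subsingleton.elim _ _⟩⟩⟩
  | prime_pow p a hp ha =>
    rw [card_isUnimodular_prime_pow hp ha, jordanTotient_prime_pow hp ha, Nat.cast_sub
      (Nat.pow_le_pow_right hp.pos (Nat.mul_le_mul_right _ (Nat.sub_le a 1)))]
    push_cast
    ring
  | coprime a b ha hb hab iha ihb =>
    rw [card_isUnimodular_congr (chineseRemainder hab), card_isUnimodular_prod,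
      jordanTotient_mul hab, Nat.cast_mul, iha (by omega), ihb (by omega)]

lemma card_dotProduct_pairs_eq_jordanTotient [NeZero r] [Nonempty ι] (n : ℤ) :
    (Nat.card {p : (ι → ZMod r) × (ι → ZMod r) // p.1 ⬝ᵥ p.2 = n} : ℝ) =
      (r : ℝ) ^ (Fintype.card ι - 1) * ∑ d ∈ (Int.gcd n r).divisors,
        (d : ℝ) * jordanTotient (Fintype.card ι) (r / d) := by
  rw [card_dotProduct_pairs_eq_sum_card_content, Nat.cast_sum, mul_sum]
  refine sum_congr rfl fun d hd => ?_
  have hdr : d ∣ r := (Nat.dvd_of_mem_divisors hd).trans (Int.gcd_dvd_natAbs_right n r)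
  have hq : 0 < r / d := Nat.div_pos (Nat.le_of_dvd (NeZero.pos r) hdr) (Nat.pos_of_mem_divisors hd)
  have : NeZero (r / d) := ⟨hq.ne'⟩
  simp_rw [card_content_eq (Nat.mul_div_cancel' hdr), content_eq_one_iff]
  push_cast
  rw [card_isUnimodular hq]
  ring

end Content

end ZMod

theorem count_sum_of_squares_4m_jordan_general (m r : ℕ) (hm : 0 < m) (hodd : Odd r)
    (n : ℤ) :
    (Nat.card {x : Fin (4 * m) → ZMod r // ∑ i, (x i) ^ 2 = (n : ZMod r)} : ℝ) =
      (r : ℝ) ^ (2 * m - 1) * ∑ d ∈ (Int.gcd n r).divisors,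
        (d : ℝ) * jordanTotient (2 * m) (r / d) := by
  have : NeZero r := ⟨hodd.pos.ne'⟩
  have : Nonempty (Fin m) := ⟨⟨0, hm⟩⟩
  have : Invertible (2 : ZMod r) := IsUnit.invertible <| by
    exact_mod_cast (ZMod.isUnit_iff_coprime 2 r).2 (Nat.coprime_two_left.2 hodd)
  obtain ⟨s, t, hst⟩ := ZMod.exists_sq_add_sq_eq_neg_one_s8 hodd
  have hcard : Fintype.card (Fin m ⊕ Fin m) = 2 * m := by simp; ring
  rw [card_sum_sq_congr (Fintype.equivOfCardEq (by simp [hcard]; ring) :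
      Fin (4 * m) ≃ (Fin m ⊕ Fin m) ⊕ (Fin m ⊕ Fin m)),
    card_sum_sq_eq_card_dotProduct hst, ZMod.card_dotProduct_pairs_eq_jordanTotient, hcard]

theorem count_sum_of_squares_4m_jordan (m r : ℕ) (hm : 0 < m) (hr : 0 < r) (hodd : Odd r)
    (n : ℤ) :
    (Nat.card {x : Fin (4 * m) → ZMod r // ∑ i, (x i) ^ 2 = (n : ZMod r)} : ℝ) =
      (r : ℝ) ^ (2 * m - 1) * ∑ d ∈ (Int.gcd n r).divisors,
        (d : ℝ) * jordanTotient (2 * m) (r / d) :=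
  count_sum_of_squares_4m_jordan_general m r hm hodd n
end

section
/- Let k = 4m with m ≥ 1, r an odd positive integer, and n an integer with gcd(n,r) = 1. Then N_{4m}(n,r) = r^{2m-1}·J_{2m}(r) = r^{4m-1}·∏_{p|r}(1 - 1/p^{2m}). -/
/-!
Both sides are multiplicative in `r` by the Chinese remainder theorem, so it suffices to take
`r = p ^ e` with `p` an odd prime not dividing `n`. Over a finite field of odd order `q` with
quadratic character `χ`, one has `N₁(a) = 1 + χ a`, and a Jacobi sum gives
`N₂(c) = q - χ(-1) + [c = 0] χ(-1) q`; convolving,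
`N_{2j}(c) = q^{2j-1} - χ(-1)^j q^{j-1} + [c = 0] (χ(-1) q)^j`, which for `4m` squares and
`c ≠ 0` is `q^{4m-1} - q^{2m-1}`. From `p^e` to `p^{e+1}` the count is multiplied by `p^{4m-1}`:
the kernel `I` of reduction squares to zero, so the solutions above a fixed solution `x₀` are the
`x₀ + t`, `t ∈ I^k`, with `∑ 2 x₀ᵢ tᵢ = n - ∑ x₀ᵢ²`, and this linear condition on `I^k` is onto
`I` because some `x₀ᵢ` is a unit.
-/

open Finset

/-- `sumSqCount k n` is `N_k(n, r)` when `n : ZMod r`. -/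
noncomputable def sumSqCount (k : ℕ) {R : Type*} [Semiring R] (n : R) : ℕ :=
  Nat.card {x : Fin k → R // ∑ i, x i ^ 2 = n}

section Basic

variable {R S : Type*} [Semiring R] [Semiring S] (k : ℕ)

theorem sumSqCount_map_ringEquiv (e : R ≃+* S) (n : R) :
    sumSqCount k (e n) = sumSqCount k n :=
  Nat.card_congr <| ((Equiv.piCongrRight fun _ => e.toEquiv).subtypeEquiv fun x => by
    simp [← map_pow, ← map_sum]).symm

theorem sumSqCount_prod (a : R) (b : S) :
    sumSqCount k (a, b) = sumSqCount k a * sumSqCount k b := by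
  rw [sumSqCount, sumSqCount, sumSqCount, ← Nat.card_prod]
  refine Nat.card_congr <| ((Equiv.arrowProdEquivProdArrow _ _ _).subtypeEquiv fun x => ?_).trans
    (Equiv.subtypeProdEquivProd (p := fun y : Fin k → R => ∑ i, y i ^ 2 = a)
      (q := fun y : Fin k → S => ∑ i, y i ^ 2 = b))
  simp [Prod.ext_iff, Prod.fst_sum, Prod.snd_sum]

theorem sumSqCount_of_subsingleton [Subsingleton R] (n : R) : sumSqCount k n = 1 := by
  rw [sumSqCount, Nat.card_eq_one_iff_unique]
  exact ⟨inferInstance, ⟨⟨0, Subsingleton.elim _ _⟩⟩⟩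

end Basic

theorem sumSqCount_add {R : Type*} [Ring R] [Fintype R] (j k : ℕ) (n : R) :
    sumSqCount (j + k) n = ∑ c, sumSqCount j c * sumSqCount k (n - c) := by
  let split : {x : Fin (j + k) → R // ∑ i, x i ^ 2 = n} ≃
      Σ c : R, {y : Fin j → R // ∑ i, y i ^ 2 = c} × {z : Fin k → R // ∑ i, z i ^ 2 = n - c} :=
    ((Fin.appendEquiv j k).subtypeEquiv
      (p := fun w => ∑ i, w.1 i ^ 2 + ∑ i, w.2 i ^ 2 = n) fun w => by
        simp [Fin.sum_univ_add]).symm.trans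
    { toFun w := ⟨∑ i, w.1.1 i ^ 2, ⟨w.1.1, rfl⟩, ⟨w.1.2, eq_sub_of_add_eq' w.2⟩⟩
      invFun s := ⟨(s.2.1.1, s.2.2.1), by rw [s.2.1.2, s.2.2.2, add_sub_cancel]⟩
      left_inv _ := rfl
      right_inv := by rintro ⟨c, ⟨y, rfl⟩, z⟩; rfl }
  rw [sumSqCount, Nat.card_congr split, Nat.card_sigma]
  simp only [Nat.card_prod, sumSqCount]

theorem sumSqCount_zmod_mul {a b : ℕ} (hab : a.Coprime b) (k : ℕ) (n : ℤ) :
    sumSqCount k (n : ZMod (a * b)) =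
      sumSqCount k (n : ZMod a) * sumSqCount k (n : ZMod b) := by
  rw [← sumSqCount_map_ringEquiv k (ZMod.chineseRemainder hab), map_intCast,
    ← sumSqCount_prod]
  congr 1

theorem sumSqCount_zmod_eq_prod_primeFactors {r : ℕ} (hr : r ≠ 0) (k : ℕ) (n : ℤ) :
    sumSqCount k (n : ZMod r) =
      ∏ p ∈ r.primeFactors, sumSqCount k (n : ZMod (p ^ r.factorization p)) :=
  Nat.multiplicative_factorization (fun d => sumSqCount k (n : ZMod d))
    (fun _ _ hab => sumSqCount_zmod_mul hab k n) (sumSqCount_of_subsingleton k _) hr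

theorem sum_const_add_ite_mul_const_add_ite {G R : Type*} [AddCommGroup G] [Fintype G]
    [DecidableEq G] [CommRing R] (a b a' b' : R) (n : G) :
    ∑ c, (a + if c = 0 then b else 0) * (a' + if n - c = 0 then b' else 0) =
      Fintype.card G * a * a' + a * b' + b * a' + if n = 0 then b * b' else 0 := by
  simp only [mul_add, add_mul, sum_add_distrib, sub_eq_zero, mul_ite, ite_mul, mul_zero,
    zero_mul, sum_ite_eq, sum_ite_eq', mem_univ, if_true, sum_const, card_univ, nsmul_eq_mul]
  split_ifs <;> ring

section FiniteField

variable {F : Type*} [Field F] [Fintype F] [DecidableEq F]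

theorem sumSqCount_one (hF : ringChar F ≠ 2) (a : F) :
    (sumSqCount 1 a : ℤ) = quadraticChar F a + 1 := by
  rw [← quadraticChar_card_sqrts hF, Set.toFinset_card, ← Nat.card_eq_fintype_card, sumSqCount,
    Nat.card_congr ((Equiv.funUnique (Fin 1) F).subtypeEquiv (q := (· ^ 2 = a)) fun x => by simp)]
  rfl

theorem sum_quadraticChar_mul_quadraticChar_sub (hF : ringChar F ≠ 2) (c : F) :
    ∑ a, quadraticChar F a * quadraticChar F (c - a) =
      if c = 0 then quadraticChar F (-1) * (Fintype.card F - 1) else -quadraticChar F (-1) := by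
  split_ifs with hc
  · have hsq (a : F) : quadraticChar F a * quadraticChar F (0 - a) =
        quadraticChar F (-1) * if a ≠ 0 then 1 else 0 := by
      rw [zero_sub, neg_eq_neg_one_mul a, map_mul]
      rcases eq_or_ne a 0 with rfl | ha
      · simp
      · rw [if_pos ha]
        linear_combination quadraticChar F (-1) * quadraticChar_sq_one ha
    subst hc
    rw [sum_congr rfl fun a _ => hsq a, ← mul_sum, sum_boole, filter_ne', card_erase_of_mem
      (mem_univ _), card_univ, Nat.cast_sub Fintype.card_pos, Nat.cast_one]
  · have hsubst (b : F) : quadraticChar F (c * b) * quadraticChar F (c - c * b) =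
        quadraticChar F b * quadraticChar F (1 - b) := by
      rw [← mul_one_sub, map_mul, map_mul]
      linear_combination quadraticChar F b * quadraticChar F (1 - b) * quadraticChar_sq_one hc
    rw [← Equiv.sum_comp (Equiv.mulLeft₀ c hc)]
    simp only [Equiv.mulLeft₀, Units.mulLeft_apply, Units.val_mk0, hsubst]
    have := jacobiSum_nontrivial_inv (quadraticChar_ne_one hF)
    rwa [(quadraticChar_isQuadratic F).inv] at this

theorem sumSqCount_two (hF : ringChar F ≠ 2) (c : F) :
    (sumSqCount 2 c : ℤ) = Fintype.card F - quadraticChar F (-1) +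
      if c = 0 then quadraticChar F (-1) * Fintype.card F else 0 := by
  have hconv : (sumSqCount 2 c : ℤ) =
      ∑ a, (quadraticChar F a + 1) * (quadraticChar F (c - a) + 1) := by
    rw [sumSqCount_add 1 1]
    push_cast
    simp only [sumSqCount_one hF]
  have hshift : ∑ a, quadraticChar F (c - a) = 0 :=
    ((Equiv.subLeft c).sum_comp (quadraticChar F)).trans (quadraticChar_sum_zero hF)
  simp only [hconv, mul_add, add_mul, mul_one, one_mul, sum_add_distrib,
    sum_quadraticChar_mul_quadraticChar_sub hF, quadraticChar_sum_zero hF, hshift]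
  split_ifs <;> simp <;> ring

theorem sumSqCount_two_mul_succ (hF : ringChar F ≠ 2) (j : ℕ) (c : F) :
    (sumSqCount (2 * (j + 1)) c : ℤ) =
      (Fintype.card F : ℤ) ^ (2 * j + 1) - quadraticChar F (-1) ^ (j + 1) * Fintype.card F ^ j +
        if c = 0 then (quadraticChar F (-1) * Fintype.card F) ^ (j + 1) else 0 := by
  induction j generalizing c with
  | zero => simpa using sumSqCount_two hF c
  | succ j ih =>
    rw [show 2 * (j + 1 + 1) = 2 + 2 * (j + 1) by ring, sumSqCount_add]
    push_cast
    simp only [sumSqCount_two hF, ih, sum_const_add_ite_mul_const_add_ite]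
    ring_nf

theorem sumSqCount_four_mul_of_ne_zero (hF : ringChar F ≠ 2) {m : ℕ} (hm : 0 < m) {c : F}
    (hc : c ≠ 0) :
    (sumSqCount (4 * m) c : ℤ) =
      (Fintype.card F : ℤ) ^ (4 * m - 1) - Fintype.card F ^ (2 * m - 1) := by
  obtain ⟨j, rfl⟩ : ∃ j, m = j + 1 := ⟨m - 1, by omega⟩
  have hε : quadraticChar F (-1) ^ (2 * j + 1 + 1) = 1 := by
    rw [show 2 * j + 1 + 1 = 2 * (j + 1) by ring, pow_mul,
      quadraticChar_sq_one (neg_ne_zero.mpr one_ne_zero), one_pow]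
  rw [show 4 * (j + 1) = 2 * (2 * j + 1 + 1) by ring, sumSqCount_two_mul_succ hF, if_neg hc, hε,
    show 2 * (2 * j + 1 + 1) - 1 = 2 * (2 * j + 1) + 1 by omega,
    show 2 * (j + 1) - 1 = 2 * j + 1 by omega]
  ring

end FiniteField

theorem AddMonoidHom.card_fiber_mul_card_of_surjective {G H : Type*} [AddGroup G] [AddGroup H]
    (f : G →+ H) (hf : Function.Surjective f) (h : H) :
    Nat.card {g // f g = h} * Nat.card H = Nat.card G := by
  obtain ⟨g₀, rfl⟩ := hf h
  have hker : Nat.card {g // f g = f g₀} = Nat.card f.ker :=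
    Nat.card_congr <| (Equiv.subRight g₀).subtypeEquiv fun g => by
      simp [AddMonoidHom.mem_ker, sub_eq_zero]
  rw [hker, ← Nat.card_congr (QuotientAddGroup.quotientKerEquivOfSurjective f hf).toEquiv]
  exact f.ker.card_mul_index

theorem Ideal.card_sum_mul_eq {R : Type*} [CommRing R] [Finite R] (I : Ideal R) {k : ℕ}
    (c : Fin k → R) {i₀ : Fin k} (hc : IsUnit (c i₀)) {b : R} (hb : b ∈ I) :
    Nat.card {t : Fin k → I // ∑ i, c i * t i = b} = Nat.card I ^ (k - 1) := by
  obtain _ | k := k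
  · exact i₀.elim0
  let φ : (Fin (k + 1) → I) →ₗ[R] I :=
    ∑ i, c i • LinearMap.proj (R := R) (φ := fun _ => I) i
  have hφ (t : Fin (k + 1) → I) : (φ t : R) = ∑ i, c i * t i := by simp [φ]
  have hsurj : Function.Surjective φ := fun y => ⟨Pi.single i₀ (hc.unit⁻¹ • y), by
    simp [φ, Pi.single_apply, smul_ite, smul_smul, Units.smul_def]⟩
  have hfib := φ.toAddMonoidHom.card_fiber_mul_card_of_surjective hsurj ⟨b, hb⟩
  rw [Nat.card_pi, Finset.prod_const, card_univ, Fintype.card_fin, pow_succ] at hfib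
  rw [Nat.add_sub_cancel, ← Nat.eq_of_mul_eq_mul_right Nat.card_pos hfib]
  exact Nat.card_congr <| Equiv.subtypeEquivRight fun t => by simp [Subtype.ext_iff, hφ]

section SquareZero

variable {R : Type*} [CommRing R] {I : Ideal R}

theorem Ideal.mul_eq_zero_of_sq_eq_bot (hI : I ^ 2 = ⊥) {a b : R} (ha : a ∈ I) (hb : b ∈ I) :
    a * b = 0 := by
  have := Ideal.mul_mem_mul ha hb
  rwa [← sq, hI, Ideal.mem_bot] at this

theorem sum_sq_add_of_sq_eq_bot (hI : I ^ 2 = ⊥) {k : ℕ} (x t : Fin k → R)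
    (ht : ∀ i, t i ∈ I) :
    ∑ i, (x i + t i) ^ 2 = ∑ i, x i ^ 2 + ∑ i, 2 * x i * t i := by
  rw [← sum_add_distrib]
  refine sum_congr rfl fun i _ => ?_
  linear_combination Ideal.mul_eq_zero_of_sq_eq_bot hI (ht i) (ht i)

theorem exists_isUnit_of_sum_sq_sub_mem [IsLocalRing R] (hI : I ^ 2 = ⊥) {k : ℕ} {n : R}
    (hn : IsUnit n) {x : Fin k → R} (hx : n - ∑ i, x i ^ 2 ∈ I) : ∃ i, IsUnit (x i) := by
  by_contra! h
  have hI_le : I ≤ IsLocalRing.maximalIdeal R := IsLocalRing.le_maximalIdeal fun h => by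
    simp [h, Ideal.top_pow] at hI
  have hsum : ∑ i, x i ^ 2 ∈ IsLocalRing.maximalIdeal R :=
    Ideal.sum_mem _ fun i _ => Ideal.pow_mem_of_mem _ (h i) 2 two_pos
  exact (show n ∈ IsLocalRing.maximalIdeal R by simpa using Ideal.add_mem _ (hI_le hx) hsum) hn

end SquareZero

section Lifting

variable {R S : Type*} [CommRing R] [IsLocalRing R] [Finite R] [CommRing S] {f : R →+* S}

theorem card_sum_sq_fiber (hker : RingHom.ker f ^ 2 = ⊥) (h2 : IsUnit (2 : R)) {n : R}
    (hn : IsUnit n) {k : ℕ} {x₀ : Fin k → R} (hx₀ : f (∑ i, x₀ i ^ 2) = f n) :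
    Nat.card {x : Fin k → R // f ∘ x = f ∘ x₀ ∧ ∑ i, x i ^ 2 = n} =
      Nat.card (RingHom.ker f) ^ (k - 1) := by
  have hb : n - ∑ i, x₀ i ^ 2 ∈ RingHom.ker f := by simp [RingHom.mem_ker, hx₀]
  obtain ⟨i₀, hi₀⟩ := exists_isUnit_of_sum_sq_sub_mem hker hn hb
  let shift : {x : Fin k → R // f ∘ x = f ∘ x₀} ≃ (Fin k → RingHom.ker f) :=
    { toFun x i := ⟨x.1 i - x₀ i, by
        rw [RingHom.mem_ker, map_sub]; exact sub_eq_zero.mpr (congrFun x.2 i)⟩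
      invFun t := ⟨x₀ + fun i => (t i : R), by ext i; simp [RingHom.mem_ker.mp (t i).2]⟩
      left_inv x := by ext i; simp
      right_inv t := by ext i; simp }
  rw [← (RingHom.ker f).card_sum_mul_eq (fun i => 2 * x₀ i) (h2.mul hi₀) hb]
  refine Nat.card_congr <| (Equiv.subtypeSubtypeEquivSubtypeInter _ _).symm.trans <|
    shift.subtypeEquiv fun x => ?_
  have hsq := sum_sq_add_of_sq_eq_bot hker x₀ (fun i => (shift x i : R)) fun i => (shift x i).2
  simp only [shift, Equiv.coe_fn_mk, add_sub_cancel] at hsq ⊢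
  rw [hsq, eq_sub_iff_add_eq']

theorem sumSqCount_eq_card_ker_pow_mul (hf : Function.Surjective f)
    (hker : RingHom.ker f ^ 2 = ⊥) (h2 : IsUnit (2 : R)) {n : R} (hn : IsUnit n) (k : ℕ) :
    sumSqCount k n = Nat.card (RingHom.ker f) ^ (k - 1) * sumSqCount k (f n) := by
  have : Finite S := Finite.of_surjective f hf
  let π : {x : Fin k → R // ∑ i, x i ^ 2 = n} → {y : Fin k → S // ∑ i, y i ^ 2 = f n} :=
    fun x => ⟨f ∘ x.1, by simp [← map_pow, ← map_sum, x.2]⟩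
  have hfiber (y) : Nat.card {x // π x = y} = Nat.card (RingHom.ker f) ^ (k - 1) := by
    let x₀ i := Function.surjInv hf (y.1 i)
    have hx₀ : f ∘ x₀ = y.1 := funext fun i => Function.surjInv_eq hf _
    rw [← card_sum_sq_fiber hker h2 hn (x₀ := x₀) (by simp [← y.2, ← hx₀])]
    refine Nat.card_congr <| (Equiv.subtypeEquivRight fun x => ?_).trans <|
      (Equiv.subtypeSubtypeEquivSubtypeInter _ (fun x => f ∘ x = f ∘ x₀)).trans <|
      Equiv.subtypeEquivRight fun x => and_comm
    rw [hx₀, ← Subtype.coe_inj]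
  have := Fintype.ofFinite {y : Fin k → S // ∑ i, y i ^ 2 = f n}
  rw [sumSqCount, ← Nat.card_congr (Equiv.sigmaFiberEquiv π), Nat.card_sigma,
    sum_congr rfl fun y _ => hfiber y, sum_const, card_univ, Fintype.card_eq_nat_card,
    smul_eq_mul, mul_comm, sumSqCount]

end Lifting

namespace ZMod

theorem isUnit_iff_castHom_prime_ne_zero {p d : ℕ} (hp : p.Prime) (hd : d ≠ 0)
    (a : ZMod (p ^ d)) :
    IsUnit a ↔ castHom (dvd_pow_self p hd) (ZMod p) a ≠ 0 := by
  have : NeZero (p ^ d) := ⟨pow_ne_zero _ hp.ne_zero⟩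
  rw [← natCast_zmod_val a, isUnit_natCast_iff_not_dvd_pow hp (Nat.pos_of_ne_zero hd),
    map_natCast, Ne, natCast_eq_zero_iff]

theorem isLocalRing_prime_pow {p d : ℕ} (hp : p.Prime) (hd : d ≠ 0) :
    IsLocalRing (ZMod (p ^ d)) :=
  have : Nontrivial (ZMod (p ^ d)) := nontrivial_iff.mpr (Nat.one_lt_pow hd hp.one_lt).ne'
  .of_nonunits_add fun a b ha hb => by
    simp_all [mem_nonunits_iff, isUnit_iff_castHom_prime_ne_zero hp hd]

theorem ker_castHom_sq_eq_bot {M N : ℕ} [NeZero N] (h : M ∣ N) (hN : N ∣ M ^ 2) :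
    RingHom.ker (castHom h (ZMod M)) ^ 2 = ⊥ := by
  rw [eq_bot_iff, sq, Ideal.mul_le]
  intro a ha b hb
  rw [RingHom.mem_ker, castHom_apply, cast_eq_val, natCast_eq_zero_iff] at ha hb
  rw [Ideal.mem_bot, ← natCast_zmod_val a, ← natCast_zmod_val b, ← Nat.cast_mul,
    natCast_eq_zero_iff]
  exact hN.trans (sq M ▸ Nat.mul_dvd_mul ha hb)

theorem card_ker_castHom {M N : ℕ} (h : M ∣ N) [NeZero M] :
    Nat.card (RingHom.ker (castHom h (ZMod M))) * M = N := by
  have := (castHom h (ZMod M)).toAddMonoidHom.card_fiber_mul_card_of_surjective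
    (castHom_surjective h) 0
  rwa [Nat.card_zmod, Nat.card_zmod] at this

end ZMod

theorem sumSqCount_zmod_prime_pow_succ_succ {p : ℕ} (hp : p.Prime) (hp2 : p ≠ 2) {n : ℤ}
    (hn : IsCoprime (p : ℤ) n) (k e : ℕ) :
    sumSqCount k (n : ZMod (p ^ (e + 2))) =
      p ^ (k - 1) * sumSqCount k (n : ZMod (p ^ (e + 1))) := by
  have : NeZero p := ⟨hp.ne_zero⟩
  have : IsLocalRing (ZMod (p ^ (e + 2))) := ZMod.isLocalRing_prime_pow hp (by omega)
  have hdvd : p ^ (e + 1) ∣ p ^ (e + 2) := pow_dvd_pow p (by omega)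
  have hker : Nat.card (RingHom.ker (ZMod.castHom hdvd (ZMod (p ^ (e + 1))))) = p :=
    Nat.eq_of_mul_eq_mul_right (pow_pos hp.pos _) <| by
      rw [ZMod.card_ker_castHom, ← pow_succ']
  have h2 : IsUnit (2 : ZMod (p ^ (e + 2))) := by
    have := (ZMod.isUnit_natCast_iff_not_dvd_pow (a := 2) hp (Nat.succ_pos (e + 1))).mpr
      fun h => hp2 ((Nat.prime_dvd_prime_iff_eq hp Nat.prime_two).mp h)
    exact_mod_cast this
  have hnu : IsUnit (n : ZMod (p ^ (e + 2))) := by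
    rw [ZMod.coe_int_isUnit_iff_isCoprime]
    exact_mod_cast hn.pow_left
  rw [sumSqCount_eq_card_ker_pow_mul (ZMod.castHom_surjective hdvd)
    (ZMod.ker_castHom_sq_eq_bot hdvd (by rw [← pow_mul]; exact pow_dvd_pow p (by omega))) h2 hnu,
    hker, map_intCast]

theorem sumSqCount_zmod_prime_pow_succ {p : ℕ} (hp : p.Prime) (hp2 : p ≠ 2) {n : ℤ}
    (hn : IsCoprime (p : ℤ) n) (k e : ℕ) :
    sumSqCount k (n : ZMod (p ^ (e + 1))) = p ^ (e * (k - 1)) * sumSqCount k (n : ZMod p) := by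
  induction e with
  | zero => rw [zero_add, pow_one, zero_mul, pow_zero, one_mul]
  | succ e ih => rw [sumSqCount_zmod_prime_pow_succ_succ hp hp2 hn, ih, ← mul_assoc, ← pow_add,
      add_one_mul, add_comm (k - 1)]

theorem sumSqCount_zmod_prime_pow_four_mul {p : ℕ} (hp : p.Prime) (hp2 : p ≠ 2) {n : ℤ}
    (hn : IsCoprime (p : ℤ) n) {m : ℕ} (hm : 0 < m) (e : ℕ) :
    (sumSqCount (4 * m) (n : ZMod (p ^ (e + 1))) : ℝ) =
      ((p : ℝ) ^ (e + 1)) ^ (4 * m - 1) * (1 - 1 / (p : ℝ) ^ (2 * m)) := by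
  have : Fact p.Prime := ⟨hp⟩
  have hc : (n : ZMod p) ≠ 0 := ((ZMod.coe_int_isUnit_iff_isCoprime n p).mpr hn).ne_zero
  have hF : ringChar (ZMod p) ≠ 2 := by rwa [ZMod.ringChar_zmod_n]
  have hprime : (sumSqCount (4 * m) (n : ZMod p) : ℝ) =
      (p : ℝ) ^ (4 * m - 1) - p ^ (2 * m - 1) := by
    exact_mod_cast ZMod.card p ▸ sumSqCount_four_mul_of_ne_zero hF hm hc
  rw [sumSqCount_zmod_prime_pow_succ hp hp2 hn, Nat.cast_mul, hprime]
  obtain ⟨j, rfl⟩ : ∃ j, m = j + 1 := ⟨m - 1, by omega⟩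
  rw [show 4 * (j + 1) - 1 = 4 * j + 3 by omega, show 2 * (j + 1) - 1 = 2 * j + 1 by omega]
  have : (p : ℝ) ≠ 0 := Nat.cast_ne_zero.mpr hp.ne_zero
  push_cast
  field_simp
  ring

theorem sumSqCount_four_mul_zmod_of_isCoprime {m r : ℕ} (hm : 0 < m) (hodd : Odd r) {n : ℤ}
    (hn : IsCoprime n (r : ℤ)) :
    (sumSqCount (4 * m) (n : ZMod r) : ℝ) =
      (r : ℝ) ^ (4 * m - 1) * ∏ p ∈ r.primeFactors, (1 - 1 / (p : ℝ) ^ (2 * m)) := by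
  have hr : r ≠ 0 := hodd.pos.ne'
  conv_rhs => enter [1, 1, 1]; rw [← Nat.prod_factorization_pow_eq_self hr]
  rw [sumSqCount_zmod_eq_prod_primeFactors hr, Finsupp.prod, Nat.support_factorization,
    Nat.cast_prod, Nat.cast_prod, ← prod_pow, ← prod_mul_distrib]
  refine prod_congr rfl fun p hp => ?_
  obtain ⟨hp, hpr, -⟩ := Nat.mem_primeFactors.mp hp
  have hp2 : p ≠ 2 := by
    rintro rfl
    exact Nat.not_even_iff_odd.mpr hodd (even_iff_two_dvd.mpr hpr)
  obtain ⟨e, he⟩ := Nat.exists_eq_add_of_lt (hp.factorization_pos_of_dvd hr hpr)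
  rw [he, zero_add, sumSqCount_zmod_prime_pow_four_mul hp hp2
    (hn.symm.of_isCoprime_of_dvd_left (Int.natCast_dvd_natCast.mpr hpr)) hm, Nat.cast_pow]

theorem count_sum_of_squares_4m_coprime_general (m r : ℕ) (hm : 0 < m) (hodd : Odd r)
    (n : ℤ) (hn : IsCoprime n (r : ℤ)) :
    (Nat.card {x : Fin (4 * m) → ZMod r // ∑ i, (x i) ^ 2 = (n : ZMod r)} : ℝ) =
        (r : ℝ) ^ (2 * m - 1) * jordanTotient (2 * m) r ∧
      (Nat.card {x : Fin (4 * m) → ZMod r // ∑ i, (x i) ^ 2 = (n : ZMod r)} : ℝ) =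
        (r : ℝ) ^ (4 * m - 1) * ∏ p ∈ r.primeFactors, (1 - 1 / (p : ℝ) ^ (2 * m)) := by
  have key := sumSqCount_four_mul_zmod_of_isCoprime hm hodd hn
  refine ⟨?_, key⟩
  rw [← sumSqCount, key, jordanTotient, ← mul_assoc, ← pow_add]
  congr 2
  omega

theorem count_sum_of_squares_4m_coprime (m r : ℕ) (hm : 0 < m) (hr : 0 < r) (hodd : Odd r)
    (n : ℤ) (hn : IsCoprime n (r : ℤ)) :
    (Nat.card {x : Fin (4 * m) → ZMod r // ∑ i, (x i) ^ 2 = (n : ZMod r)} : ℝ) =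
        (r : ℝ) ^ (2 * m - 1) * jordanTotient (2 * m) r ∧
      (Nat.card {x : Fin (4 * m) → ZMod r // ∑ i, (x i) ^ 2 = (n : ZMod r)} : ℝ) =
        (r : ℝ) ^ (4 * m - 1) * ∏ p ∈ r.primeFactors, (1 - 1 / (p : ℝ) ^ (2 * m)) :=
  count_sum_of_squares_4m_coprime_general m r hm hodd n hn
end

section
/- For every odd positive integer r, the number of solutions of x² + y² ≡ 0 (mod r) in (ℤ/rℤ)² equals r · ∑_{d|r} (-1)^{(d-1)/2} · φ(d)/d, where φ is Euler's totient. -/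
/-!
For odd `r` both sides are multiplicative in `r`: the left one by the Chinese remainder theorem,
the right one because `r · ∑_{d ∣ r} χ₄(d) φ(d) / d` is the Dirichlet convolution `(χ₄ φ) * id`
evaluated at `r`, where `χ₄(d) = (-1) ^ ((d - 1) / 2)` for odd `d`. So it suffices to treat
`r = p ^ k` with `p` an odd prime.

If `p ≡ 1 (mod 4)`, then `-1` has a square root `i` modulo `p ^ k`, and since `2` is invertible,
`(x, y) ↦ (x + i y, x - i y)` turns `x² + y² = 0` into `u v = 0`. Counting `u` for each `v` gives
`∑_{v} gcd(v, n) = ∑_{d ∣ n} φ(n / d) d`, which is the convolution at `n = p ^ k` because `χ₄ = 1`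
on the divisors of `p ^ k`.

If `p ≡ 3 (mod 4)`, then `-1` is not a square modulo `p`, so `p ^ k ∣ x² + y²` forces
`p ^ ⌈k/2⌉ ∣ x, y`. This leaves `(p ^ ⌊k/2⌋)²` solutions, and the convolution satisfies the same
recursion `c(p ^ (k + 2)) = p² c(p ^ k)`.
-/

open Finset ArithmeticFunction
open scoped Nat

section Rings

variable {R S : Type*}

lemma card_sq_add_sq_eq_zero_congr [Semiring R] [Semiring S] (e : R ≃+* S) :
    Nat.card {q : R × R // q.1 ^ 2 + q.2 ^ 2 = 0} =
      Nat.card {q : S × S // q.1 ^ 2 + q.2 ^ 2 = 0} :=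
  Nat.card_congr <| (e.toEquiv.prodCongr e.toEquiv).subtypeEquiv fun q => by
    simp only [Equiv.prodCongr_apply, Prod.map, RingEquiv.toEquiv_eq_coe, EquivLike.coe_coe,
      ← map_pow, ← map_add, map_eq_zero_iff e e.injective]

lemma card_sq_add_sq_eq_zero_prod [Semiring R] [Semiring S] :
    Nat.card {q : (R × S) × (R × S) // q.1 ^ 2 + q.2 ^ 2 = 0} =
      Nat.card {q : R × R // q.1 ^ 2 + q.2 ^ 2 = 0} *
        Nat.card {q : S × S // q.1 ^ 2 + q.2 ^ 2 = 0} := by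
  rw [← Nat.card_prod]
  exact Nat.card_congr
    { toFun := fun q => (⟨(q.1.1.1, q.1.2.1), congrArg Prod.fst q.2⟩,
        ⟨(q.1.1.2, q.1.2.2), congrArg Prod.snd q.2⟩)
      invFun := fun z => ⟨((z.1.1.1, z.2.1.1), (z.1.1.2, z.2.1.2)), Prod.ext z.1.2 z.2.2⟩
      left_inv := fun _ => rfl
      right_inv := fun _ => rfl }

lemma card_sq_add_sq_eq_zero_eq_card_mul_eq_zero [CommRing R] {i : R} (hi : i ^ 2 = -1)
    (h2 : IsUnit (2 : R)) :
    Nat.card {q : R × R // q.1 ^ 2 + q.2 ^ 2 = 0} = Nat.card {q : R × R // q.1 * q.2 = 0} := by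
  set h : R := ↑h2.unit⁻¹
  have hh : h * 2 = 1 := h2.val_inv_mul
  let E : R × R ≃ R × R :=
    { toFun := fun q => (q.1 + i * q.2, q.1 - i * q.2)
      invFun := fun z => (h * (z.1 + z.2), -i * h * (z.1 - z.2))
      left_inv := fun q => by
        ext
        · linear_combination q.1 * hh
        · linear_combination (-2 * h * q.2) * hi + q.2 * hh
      right_inv := fun z => by
        ext
        · linear_combination (-(h * (z.1 - z.2))) * hi + z.1 * hh
        · linear_combination (h * (z.1 - z.2)) * hi + z.2 * hh }
  refine Nat.card_congr (E.subtypeEquiv fun q => ?_)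
  show _ ↔ (q.1 + i * q.2) * (q.1 - i * q.2) = 0
  rw [show (q.1 + i * q.2) * (q.1 - i * q.2) = q.1 ^ 2 + q.2 ^ 2 by
    linear_combination (-(q.2 ^ 2)) * hi]

end Rings

lemma ZMod.card_sq_add_sq_eq_zero_mul {m n : ℕ} (h : m.Coprime n) :
    Nat.card {q : ZMod (m * n) × ZMod (m * n) // q.1 ^ 2 + q.2 ^ 2 = 0} =
      Nat.card {q : ZMod m × ZMod m // q.1 ^ 2 + q.2 ^ 2 = 0} *
        Nat.card {q : ZMod n × ZMod n // q.1 ^ 2 + q.2 ^ 2 = 0} := by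
  rw [card_sq_add_sq_eq_zero_congr (ZMod.chineseRemainder h), card_sq_add_sq_eq_zero_prod]

theorem Nat.sum_range_gcd (n : ℕ) : ∑ k ∈ range n, n.gcd k = ∑ d ∈ n.divisors, φ (n / d) * d := by
  rw [← sum_fiberwise_of_maps_to (t := n.divisors) (g := n.gcd) fun k hk =>
    Nat.mem_divisors.mpr ⟨Nat.gcd_dvd_left n k, by simp at hk; omega⟩]
  refine sum_congr rfl fun d hd => ?_
  rw [sum_const_nat fun k hk => (mem_filter.mp hk).2,
    ← Nat.totient_div_of_dvd (Nat.dvd_of_mem_divisors hd)]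

namespace ZMod

variable {n : ℕ} [NeZero n]

lemma card_dvd_val_s10 {m : ℕ} (hm : m ∣ n) : Nat.card {u : ZMod n // m ∣ u.val} = n / m := by
  have hm0 : 0 < m := Nat.pos_of_dvd_of_pos hm (NeZero.pos n)
  have hlt (j : Fin (n / m)) : m * j < n :=
    calc m * j < m * (n / m) := (Nat.mul_lt_mul_left hm0).mpr j.2
      _ = n := Nat.mul_div_cancel' hm
  rw [← Nat.card_fin (n / m)]
  exact Nat.card_congr
    { toFun := fun u => ⟨u.1.val / m, Nat.div_lt_div_of_lt_of_dvd hm (ZMod.val_lt u.1)⟩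
      invFun := fun j => ⟨(m * j : ℕ), by
        rw [ZMod.val_cast_of_lt (hlt j)]; exact dvd_mul_right _ _⟩
      left_inv := fun u => Subtype.ext <| by
        simp only [Nat.mul_div_cancel' u.2, ZMod.natCast_zmod_val]
      right_inv := fun j => Fin.ext <| by
        simp only [ZMod.val_cast_of_lt (hlt j), Nat.mul_div_cancel_left _ hm0] }

lemma card_mul_eq_zero_left (v : ZMod n) :
    Nat.card {u : ZMod n // u * v = 0} = n.gcd v.val := by
  have hord : addOrderOf v = n / n.gcd v.val := by
    rw [← ZMod.addOrderOf_coe _ (NeZero.ne n), ZMod.natCast_zmod_val]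
  have hker (u : ZMod n) : u * v = 0 ↔ n / n.gcd v.val ∣ u.val := by
    rw [← hord, addOrderOf_dvd_iff_nsmul_eq_zero, nsmul_eq_mul, ZMod.natCast_zmod_val]
  rw [Nat.card_congr (Equiv.subtypeEquivRight hker),
    card_dvd_val_s10 (Nat.div_dvd_of_dvd (Nat.gcd_dvd_left _ _)),
    Nat.div_div_self (Nat.gcd_dvd_left _ _) (NeZero.ne n)]

lemma sum_comp_val_eq_sum_range {M : Type*} [AddCommMonoid M] (f : ℕ → M) :
    ∑ v : ZMod n, f v.val = ∑ k ∈ range n, f k := by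
  obtain ⟨k, rfl⟩ := Nat.exists_eq_succ_of_ne_zero (NeZero.ne n)
  exact Fin.sum_univ_eq_sum_range f _

lemma card_mul_eq_zero_s10 :
    Nat.card {q : ZMod n × ZMod n // q.1 * q.2 = 0} = ∑ d ∈ n.divisors, φ (n / d) * d := by
  let e : {q : ZMod n × ZMod n // q.1 * q.2 = 0} ≃ (v : ZMod n) × {u : ZMod n // u * v = 0} :=
    { toFun := fun q => ⟨q.1.2, q.1.1, q.2⟩
      invFun := fun q => ⟨(q.2.1, q.1), q.2.2⟩
      left_inv := fun _ => rfl
      right_inv := fun _ => rfl }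
  rw [Nat.card_congr e, Nat.card_sigma]
  simp only [card_mul_eq_zero_left]
  rw [sum_comp_val_eq_sum_range (n.gcd ·), Nat.sum_range_gcd]

end ZMod

lemma ZMod.isSquare_neg_one_prime_pow {p : ℕ} (hp : p.Prime) (hp1 : p % 4 = 1) (k : ℕ) :
    IsSquare (-1 : ZMod (p ^ k)) := by
  have := Fact.mk hp
  rcases k with _ | j
  · rw [pow_zero]; exact ⟨0, Subsingleton.elim _ _⟩
  obtain ⟨z, hz⟩ := ZMod.exists_sq_eq_neg_one_iff.mpr (by omega : p % 4 ≠ 3)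
  have hpz : (p : ℤ) ∣ (z.val : ℤ) ^ 2 - (-1) := by
    rw [← ZMod.intCast_zmod_eq_zero_iff_dvd]
    push_cast [ZMod.natCast_zmod_val]
    rw [hz]; ring
  -- raising to the power `p ^ j` lifts a congruence modulo `p` to one modulo `p ^ (j + 1)`
  have hlift := dvd_sub_pow_of_dvd_sub hpz j
  rw [(hp.odd_of_ne_two (by omega)).pow.neg_one_pow, ← pow_mul, mul_comm, pow_mul,
    ← Nat.cast_pow, ← ZMod.intCast_eq_intCast_iff_dvd_sub] at hlift
  push_cast at hlift
  exact ⟨_, hlift.trans (sq _)⟩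

lemma Nat.Prime.dvd_of_dvd_sq_add_sq {p a b : ℕ} (hp : p.Prime) (hp3 : p % 4 = 3)
    (h : p ∣ a ^ 2 + b ^ 2) : p ∣ a ∧ p ∣ b := by
  have := Fact.mk hp
  simp only [← ZMod.natCast_eq_zero_iff] at h ⊢
  push_cast at h
  have hb : (b : ZMod p) = 0 := by
    by_contra hb
    exact ZMod.mod_four_ne_three_of_sq_eq_neg_sq' hb (eq_neg_of_add_eq_zero_left h) hp3
  rw [hb, zero_pow two_ne_zero, add_zero, pow_eq_zero_iff two_ne_zero] at h
  exact ⟨h, hb⟩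

lemma Nat.Prime.pow_dvd_of_pow_dvd_sq_add_sq {p : ℕ} (hp : p.Prime) (hp3 : p % 4 = 3) (k : ℕ)
    {a b : ℕ} (h : p ^ k ∣ a ^ 2 + b ^ 2) : p ^ ((k + 1) / 2) ∣ a ∧ p ^ ((k + 1) / 2) ∣ b := by
  induction k using Nat.twoStepInduction generalizing a b with
  | zero => simp
  | one => simpa using hp.dvd_of_dvd_sq_add_sq hp3 (by simpa using h)
  | more k ih _ =>
    obtain ⟨⟨a, rfl⟩, ⟨b, rfl⟩⟩ := hp.dvd_of_dvd_sq_add_sq hp3 (dvd_of_pow_dvd (by omega) h)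
    have h' : p ^ 2 * p ^ k ∣ p ^ 2 * (a ^ 2 + b ^ 2) := by
      rw [← pow_add, add_comm]; convert h using 1; ring
    obtain ⟨ha, hb⟩ := ih ((mul_dvd_mul_iff_left (pow_ne_zero 2 hp.ne_zero)).mp h')
    rw [show (k + 2 + 1) / 2 = (k + 1) / 2 + 1 by omega, pow_succ']
    exact ⟨mul_dvd_mul_left p ha, mul_dvd_mul_left p hb⟩

lemma ZMod.card_sq_add_sq_eq_zero_of_isSquare_neg_one {n : ℕ} (hn : Odd n)
    (h : IsSquare (-1 : ZMod n)) :
    Nat.card {q : ZMod n × ZMod n // q.1 ^ 2 + q.2 ^ 2 = 0} =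
      ∑ d ∈ n.divisors, φ (n / d) * d := by
  have : NeZero n := ⟨hn.pos.ne'⟩
  obtain ⟨i, hi⟩ := h
  have h2 : IsUnit (2 : ZMod n) := by
    simpa using (ZMod.isUnit_iff_coprime 2 n).mpr (Nat.coprime_two_left.mpr hn)
  rw [card_sq_add_sq_eq_zero_eq_card_mul_eq_zero ((sq i).trans hi.symm) h2,
    ZMod.card_mul_eq_zero_s10]

lemma ZMod.card_sq_add_sq_eq_zero_prime_pow_of_mod_four_eq_three {p : ℕ} (hp : p.Prime)
    (hp3 : p % 4 = 3) (k : ℕ) :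
    Nat.card {q : ZMod (p ^ k) × ZMod (p ^ k) // q.1 ^ 2 + q.2 ^ 2 = 0} = (p ^ (k / 2)) ^ 2 := by
  have : NeZero (p ^ k) := ⟨pow_ne_zero k hp.ne_zero⟩
  set c := (k + 1) / 2
  have hsol (x y : ZMod (p ^ k)) : x ^ 2 + y ^ 2 = 0 ↔ p ^ c ∣ x.val ∧ p ^ c ∣ y.val := by
    have hxy : x ^ 2 + y ^ 2 = ((x.val ^ 2 + y.val ^ 2 : ℕ) : ZMod (p ^ k)) := by
      push_cast [ZMod.natCast_zmod_val]; rfl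
    rw [hxy, ZMod.natCast_eq_zero_iff]
    refine ⟨hp.pow_dvd_of_pow_dvd_sq_add_sq hp3 k, fun ⟨hx, hy⟩ => ?_⟩
    have hk : p ^ k ∣ (p ^ c) ^ 2 := by rw [← pow_mul]; exact pow_dvd_pow p (by omega)
    exact dvd_add (hk.trans (pow_dvd_pow_of_dvd hx 2)) (hk.trans (pow_dvd_pow_of_dvd hy 2))
  let e : {q : ZMod (p ^ k) × ZMod (p ^ k) // q.1 ^ 2 + q.2 ^ 2 = 0} ≃
      {x : ZMod (p ^ k) // p ^ c ∣ x.val} × {y : ZMod (p ^ k) // p ^ c ∣ y.val} :=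
    (Equiv.subtypeEquivRight fun q : ZMod (p ^ k) × ZMod (p ^ k) => hsol q.1 q.2).trans
      (Equiv.subtypeProdEquivProd (p := fun x : ZMod (p ^ k) => p ^ c ∣ x.val)
        (q := fun y : ZMod (p ^ k) => p ^ c ∣ y.val))
  rw [Nat.card_congr e, Nat.card_prod, ZMod.card_dvd_val_s10 (pow_dvd_pow p (by omega)),
    Nat.pow_div (by omega) hp.pos, show k - c = k / 2 by omega, sq]

namespace ArithmeticFunction

variable {R : Type*} [Semiring R]

lemma mul_natCast_id_apply (f : ArithmeticFunction R) (n : ℕ) :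
    (f * ArithmeticFunction.id) n = ∑ d ∈ n.divisors, f d * (n / d : ℕ) := by
  simp only [mul_apply, natCoe_apply, id_apply]
  exact Nat.sum_divisorsAntidiagonal fun a b => f a * (b : R)

lemma mul_natCast_id_apply_prime_pow_succ (f : ArithmeticFunction R) {p : ℕ} (hp : p.Prime)
    (k : ℕ) :
    (f * ArithmeticFunction.id) (p ^ (k + 1)) =
      (f * ArithmeticFunction.id) (p ^ k) * p + f (p ^ (k + 1)) := by
  simp only [mul_natCast_id_apply, Nat.sum_divisors_prime_pow hp, sum_range_succ (n := k + 1),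
    Nat.div_self (pow_pos hp.pos _), Nat.cast_one, mul_one, sum_mul, mul_assoc]
  congr 1
  refine sum_congr rfl fun i hi => ?_
  have hik : i ≤ k := Nat.lt_succ_iff.mp (mem_range.mp hi)
  rw [← Nat.cast_mul, Nat.pow_div hik hp.pos, Nat.pow_div (by omega) hp.pos, ← pow_succ,
    show k + 1 - i = k - i + 1 by omega]

end ArithmeticFunction

def χ₄Totient : ArithmeticFunction ℤ := ⟨fun n => ZMod.χ₄ n * φ n, by simp⟩

lemma χ₄Totient_apply (n : ℕ) : χ₄Totient n = ZMod.χ₄ n * φ n := rfl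

lemma isMultiplicative_χ₄Totient : χ₄Totient.IsMultiplicative := by
  refine ⟨by simp [χ₄Totient_apply], fun {m n} hmn => ?_⟩
  simp only [χ₄Totient_apply, Nat.cast_mul, map_mul, Nat.totient_mul hmn]
  ring

lemma χ₄Totient_mul_id_prime_pow_of_mod_four_eq_one {p : ℕ} (hp : p.Prime) (hp1 : p % 4 = 1)
    (k : ℕ) :
    (χ₄Totient * ArithmeticFunction.id) (p ^ k) = ∑ d ∈ (p ^ k).divisors, φ (p ^ k / d) * d := by
  rw [mul_natCast_id_apply, ← Nat.sum_divisorsAntidiagonal' (fun a b => φ a * b),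
    Nat.sum_divisorsAntidiagonal (fun a b => φ a * b), Nat.cast_sum]
  refine sum_congr rfl fun d hd => ?_
  obtain ⟨i, -, rfl⟩ := (Nat.dvd_prime_pow hp).mp (Nat.dvd_of_mem_divisors hd)
  have hχ : ZMod.χ₄ (p ^ i : ℕ) = 1 := ZMod.χ₄_nat_one_mod_four (by simp [Nat.pow_mod, hp1])
  rw [χ₄Totient_apply, hχ, one_mul, Nat.cast_mul]

lemma χ₄Totient_mul_id_prime_pow_of_mod_four_eq_three {p : ℕ} (hp : p.Prime) (hp3 : p % 4 = 3)
    (k : ℕ) : (χ₄Totient * ArithmeticFunction.id) (p ^ k) = ((p ^ (k / 2)) ^ 2 : ℕ) := by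
  have hχ (j : ℕ) : ZMod.χ₄ (p ^ (j + 1) : ℕ) = -ZMod.χ₄ (p ^ j : ℕ) := by
    rw [pow_succ, Nat.cast_mul, map_mul, ZMod.χ₄_nat_three_mod_four hp3, mul_neg_one]
  induction k using Nat.twoStepInduction with
  | zero => simp [χ₄Totient_apply]
  | one =>
    rw [← zero_add 1, mul_natCast_id_apply_prime_pow_succ _ hp]
    simp [χ₄Totient_apply, ZMod.χ₄_nat_three_mod_four hp3, Nat.totient_prime hp,
      Nat.cast_sub hp.one_le]
  | more k ih _ =>
    have hφ : φ (p ^ (k + 2)) = p * φ (p ^ (k + 1)) := by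
      rw [pow_succ', Nat.totient_mul_of_prime_of_dvd hp (dvd_pow_self p k.succ_ne_zero)]
    -- the terms `χ₄(p ^ (k + 1)) φ(p ^ (k + 1)) p` and `χ₄(p ^ (k + 2)) φ(p ^ (k + 2))` cancel
    rw [mul_natCast_id_apply_prime_pow_succ _ hp, mul_natCast_id_apply_prime_pow_succ _ hp, ih,
      χ₄Totient_apply, χ₄Totient_apply, hχ (k + 1), hφ, show (k + 2) / 2 = k / 2 + 1 by omega]
    push_cast
    ring

lemma ZMod.card_sq_add_sq_eq_zero_eq_χ₄Totient_mul_id {r : ℕ} (hr : Odd r) :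
    (Nat.card {q : ZMod r × ZMod r // q.1 ^ 2 + q.2 ^ 2 = 0} : ℤ) =
      (χ₄Totient * ArithmeticFunction.id) r := by
  induction r using Nat.recOnPosPrimePosCoprime with
  | prime_pow p k hp hk =>
    have hp2 : p % 2 = 1 := Nat.odd_iff.mp (hr.of_dvd_nat (dvd_pow_self p hk.ne'))
    rcases (by omega : p % 4 = 1 ∨ p % 4 = 3) with hp1 | hp3
    · rw [ZMod.card_sq_add_sq_eq_zero_of_isSquare_neg_one hr
          (ZMod.isSquare_neg_one_prime_pow hp hp1 k),
        χ₄Totient_mul_id_prime_pow_of_mod_four_eq_one hp hp1]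
    · rw [ZMod.card_sq_add_sq_eq_zero_prime_pow_of_mod_four_eq_three hp hp3,
        χ₄Totient_mul_id_prime_pow_of_mod_four_eq_three hp hp3]
  | zero => exact absurd hr Nat.not_odd_zero
  | one => simp [χ₄Totient_apply]; decide
  | coprime a b _ _ hab iha ihb =>
    rw [ZMod.card_sq_add_sq_eq_zero_mul hab, Nat.cast_mul, iha (Nat.odd_mul.mp hr).1,
      ihb (Nat.odd_mul.mp hr).2,
      (isMultiplicative_χ₄Totient.mul isMultiplicative_id.natCast).map_mul_of_coprime hab]

theorem count_x2_add_y2_eq_zero_general (r : ℕ) (hodd : Odd r) :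
    (Nat.card {p : ZMod r × ZMod r // p.1 ^ 2 + p.2 ^ 2 = 0} : ℝ) =
      (r : ℝ) * ∑ d ∈ r.divisors, (-1 : ℝ) ^ ((d - 1) / 2) * Nat.totient d / d := by
  rw [← Int.cast_natCast, ZMod.card_sq_add_sq_eq_zero_eq_χ₄Totient_mul_id hodd,
    mul_natCast_id_apply, Int.cast_sum, mul_sum]
  refine sum_congr rfl fun d hd => ?_
  have hdr := Nat.dvd_of_mem_divisors hd
  have hd0 : (d : ℝ) ≠ 0 := Nat.cast_ne_zero.mpr (Nat.pos_of_mem_divisors hd).ne'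
  have hd2 : d % 2 = 1 := Nat.odd_iff.mp (hodd.of_dvd_nat hdr)
  rw [χ₄Totient_apply, ZMod.χ₄_eq_neg_one_pow hd2, show (d - 1) / 2 = d / 2 by omega]
  simp only [Int.cast_mul, Int.cast_pow, Int.cast_neg, Int.cast_one, Int.cast_natCast,
    Nat.cast_div hdr hd0]
  field_simp

theorem count_x2_add_y2_eq_zero (r : ℕ) (hr : 0 < r) (hodd : Odd r) :
    (Nat.card {p : ZMod r × ZMod r // p.1 ^ 2 + p.2 ^ 2 = 0} : ℝ) =
      (r : ℝ) * ∑ d ∈ r.divisors, (-1 : ℝ) ^ ((d - 1) / 2) * Nat.totient d / d :=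
  count_x2_add_y2_eq_zero_general r hodd
end

section
/- Let k = 4m with m ≥ 1 and n an odd integer. Then for every ν ≥ 1, the number of solutions of x_1²+...+x_k² ≡ n (mod 2^ν) equals 2^{ν(4m-1)}. -/
/-!
Write `N_ν(c)` for the number of solutions modulo `2 ^ ν`. Reducing solutions modulo `2 ^ (ν + 1)`
to solutions modulo `2 ^ ν` gives `N_{ν+1}(n) + N_{ν+1}(n + 2 ^ ν) = K_ν · N_ν(n)`, where `K_ν` is
the size of the kernel of `(ℤ/2^{ν+1})^k → (ℤ/2^ν)^k`; the same `K_ν` relates the sizes of the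
two coordinate spaces. The two counts on the left are equal. For `ν ≥ 1`, split the `4m`
coordinates into `2m` pairs and let `h = 2 ^ (ν - 1)`: as `n` is odd and the number of pairs is
even, some pair `(a, b)` has `a + b + h` odd, and replacing `(a, b)` by `(-a - h, -b - h)` adds
`2 ^ ν (a + b + h) = 2 ^ ν` to the sum of squares. This move negates `a + b + h`, so it does not
change the set of such pairs; performing it at a pair chosen from that set is an involution
exchanging the two solution sets. For `ν = 0` one adds `1` to a single coordinate instead.
Induction on `ν` then gives `N_ν(n) · 2 ^ ν = 2 ^ (4mν)`.
-/

open Finset Function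

noncomputable def sqCount (ι : Type*) [Fintype ι] (ν : ℕ) (n : ℤ) : ℕ :=
  Nat.card {x : ι → ZMod (2 ^ ν) // ∑ i, x i ^ 2 = (n : ZMod (2 ^ ν))}

lemma sqCount_congr {ι ι' : Type*} [Fintype ι] [Fintype ι'] (e : ι ≃ ι') (ν : ℕ) (n : ℤ) :
    sqCount ι ν n = sqCount ι' ν n :=
  Nat.card_congr <| (e.arrowCongr (Equiv.refl _)).subtypeEquiv fun x => by
    simp [← e.sum_comp]

lemma AddMonoidHom.card_subtype_comp_of_surjective {G H : Type*} [AddGroup G] [AddGroup H]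
    {f : G →+ H} (hf : Surjective f) (P : H → Prop) :
    Nat.card {g // P (f g)} = Nat.card {h // P h} * Nat.card f.ker := by
  rw [← Nat.card_prod]
  exact Nat.card_congr <| (Equiv.sigmaSubtypeFiberEquivSubtype f fun _ => Iff.rfl).symm.trans <|
    (Equiv.sigmaCongrRight fun h : Subtype P => f.fiberEquivKerOfSurjective hf h).trans
      (Equiv.sigmaEquivProd _ _)

namespace ZMod

lemma two_pow_eq_zero (ν : ℕ) : (2 : ZMod (2 ^ ν)) ^ ν = 0 := by
  exact_mod_cast natCast_self (2 ^ ν)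

lemma two_pow_ne_zero (ν : ℕ) : (2 : ZMod (2 ^ (ν + 1))) ^ ν ≠ 0 := by
  exact_mod_cast (natCast_eq_zero_iff _ _).not.2
    ((Nat.pow_dvd_pow_iff_le_right one_lt_two).not.2 (by omega))

end ZMod

def reduceMod (ν : ℕ) : ZMod (2 ^ (ν + 1)) →+* ZMod (2 ^ ν) :=
  ZMod.castHom (pow_dvd_pow 2 ν.le_succ) _

lemma reduceMod_eq_reduceMod_iff {ν : ℕ} {z c : ZMod (2 ^ (ν + 1))} :
    reduceMod ν z = reduceMod ν c ↔ z = c ∨ z = c + 2 ^ ν := by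
  constructor
  · intro h
    obtain ⟨w, hw⟩ := ZMod.intCast_surjective (z - c)
    rw [← sub_eq_zero, ← map_sub, ← hw, map_intCast, ZMod.intCast_zmod_eq_zero_iff_dvd] at h
    obtain ⟨t, rfl⟩ := h
    rcases Int.even_or_odd' t with ⟨u, rfl | rfl⟩
    all_goals push_cast at hw
    · left
      linear_combination (u : ZMod (2 ^ (ν + 1))) * ZMod.two_pow_eq_zero (ν + 1) - hw
    · right
      linear_combination (u : ZMod (2 ^ (ν + 1))) * ZMod.two_pow_eq_zero (ν + 1) - hw
  · rintro (rfl | rfl)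
    · rfl
    · rw [map_add, map_pow, map_ofNat, ZMod.two_pow_eq_zero, add_zero]

def reduceModPi (ι : Type*) (ν : ℕ) : (ι → ZMod (2 ^ (ν + 1))) →+ (ι → ZMod (2 ^ ν)) :=
  (reduceMod ν).toAddMonoidHom.compLeft ι

lemma reduceModPi_surjective (ι : Type*) (ν : ℕ) : Surjective (reduceModPi ι ν) :=
  (ZMod.castHom_surjective (pow_dvd_pow 2 ν.le_succ)).comp_left

lemma card_pi_zmod_two_pow_succ (ι : Type*) (ν : ℕ) :
    Nat.card (ι → ZMod (2 ^ (ν + 1))) =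
      Nat.card (ι → ZMod (2 ^ ν)) * Nat.card (reduceModPi ι ν).ker := by
  simpa using
    AddMonoidHom.card_subtype_comp_of_surjective (reduceModPi_surjective ι ν) fun _ => True

lemma sqCount_succ_add_sqCount_succ (ι : Type*) [Fintype ι] (ν : ℕ) (n : ℤ) :
    sqCount ι (ν + 1) n + sqCount ι (ν + 1) (n + 2 ^ ν) =
      sqCount ι ν n * Nat.card (reduceModPi ι ν).ker := by
  have hdisj : Disjoint (fun y : ι → ZMod (2 ^ (ν + 1)) => ∑ i, y i ^ 2 = n)
      (fun y => ∑ i, y i ^ 2 = ((n + 2 ^ ν : ℤ) : ZMod (2 ^ (ν + 1)))) := by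
    rw [Pi.disjoint_iff]
    intro y
    rw [Prop.disjoint_iff]
    rintro ⟨h₁, h₂⟩
    apply ZMod.two_pow_ne_zero ν
    push_cast at h₂
    linear_combination h₁ - h₂
  rw [sqCount, sqCount, sqCount, ← Nat.card_sum, ← Nat.card_congr (subtypeOrEquiv _ _ hdisj),
    ← AddMonoidHom.card_subtype_comp_of_surjective (reduceModPi_surjective ι ν)]
  refine Nat.card_congr (Equiv.subtypeEquivRight fun y => ?_)
  have hsum : ∑ i, reduceModPi ι ν y i ^ 2 = reduceMod ν (∑ i, y i ^ 2) := by
    simp [reduceModPi, map_sum]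
  rw [hsum, ← map_intCast (reduceMod ν) n, reduceMod_eq_reduceMod_iff]
  push_cast
  rfl

lemma sqCount_one_add_one (ι : Type*) [Fintype ι] [DecidableEq ι] [Nonempty ι] (c : ℤ) :
    sqCount ι 1 (c + 1) = sqCount ι 1 c := by
  have hsq : ∀ a : ZMod (2 ^ 1), a ^ 2 = a := by decide
  have hshift : ∀ a b : ZMod (2 ^ 1), a = b + 1 ↔ a + 1 = b := by decide
  refine Nat.card_congr ((Equiv.addRight (Pi.single (Classical.arbitrary ι) 1)).subtypeEquiv
    fun y => ?_)
  simp [hsq, sum_add_distrib, hshift]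

section PairFlip

variable {κ R : Type*} [CommRing R]

def pairSum (h : R) (y : κ × Fin 2 → R) (j : κ) : R := y (j, 0) + y (j, 1) + h

lemma exists_pairSum_eq_one [Fintype κ] (π : R →+* ZMod 2) (h : R)
    (hκ : Even (Fintype.card κ)) {y : κ × Fin 2 → R} (hy : π (∑ i, y i ^ 2) = 1) :
    ∃ j, π (pairSum h y j) = 1 := by
  have hsq : ∀ a : ZMod 2, a ^ 2 = a := by decide
  have hsum : π (∑ i, y i ^ 2) = ∑ j, (π (pairSum h y j) + π h) := by
    simp [Fintype.sum_prod_type, Fin.sum_univ_two, pairSum, hsq, add_assoc,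
      CharTwo.add_self_eq_zero]
  by_contra! hne
  have hzero : ∀ j, π (pairSum h y j) = 0 := fun j => by
    have : ∀ a : ZMod 2, a ≠ 1 → a = 0 := by decide
    exact this _ (hne j)
  simp [hsum, hzero, hκ.natCast_zmod_two] at hy

variable [DecidableEq κ]

def flipPair (h : R) (j : κ) (y : κ × Fin 2 → R) : κ × Fin 2 → R :=
  fun i => if i.1 = j then -y i - h else y i

lemma flipPair_involutive (h : R) (j : κ) : Involutive (flipPair h j) := by
  intro y
  funext i
  by_cases hi : i.1 = j <;> simp [flipPair, hi]

lemma pairSum_flipPair (h : R) (j j' : κ) (y : κ × Fin 2 → R) :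
    pairSum h (flipPair h j y) j' = if j' = j then -pairSum h y j' else pairSum h y j' := by
  unfold pairSum flipPair
  split_ifs <;> ring

lemma sum_sq_flipPair [Fintype κ] (h : R) (j : κ) (y : κ × Fin 2 → R) :
    ∑ i, flipPair h j y i ^ 2 = ∑ i, y i ^ 2 + 2 * h * pairSum h y j := by
  have hsq : ∀ i,
      flipPair h j y i ^ 2 = y i ^ 2 + if i.1 = j then 2 * h * y i + h ^ 2 else 0 := by
    intro i
    unfold flipPair
    split_ifs <;> ring
  simp only [hsq, sum_add_distrib, Fintype.sum_prod_type (f := fun i => ite _ _ _)]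
  simp only [Fin.sum_univ_two, ite_add_ite, add_zero, sum_ite_eq', mem_univ, if_true, pairSum,
    add_right_inj]
  ring

noncomputable def flipOddPair [Nonempty κ] (π : R →+* ZMod 2) (h : R) (y : κ × Fin 2 → R) :
    κ × Fin 2 → R :=
  flipPair h (Classical.epsilon fun j => π (pairSum h y j) = 1) y

lemma flipOddPair_involutive [Nonempty κ] (π : R →+* ZMod 2) (h : R) :
    Involutive (flipOddPair π h : (κ × Fin 2 → R) → _) := by
  intro y
  have hodd : ∀ j, (fun j' => π (pairSum h (flipPair h j y) j') = 1) =
      fun j' => π (pairSum h y j') = 1 := by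
    intro j
    funext j'
    rw [pairSum_flipPair]
    split_ifs <;> simp [ZMod.neg_eq_self_mod_two]
  rw [flipOddPair, flipOddPair, hodd]
  exact flipPair_involutive _ _ y

lemma sum_sq_flipOddPair [Fintype κ] [Nonempty κ] (π : R →+* ZMod 2) (h : R)
    (hκ : Even (Fintype.card κ)) {y : κ × Fin 2 → R} (hy : π (∑ i, y i ^ 2) = 1) :
    ∃ s, π s = 1 ∧ ∑ i, flipOddPair π h y i ^ 2 = ∑ i, y i ^ 2 + 2 * h * s :=
  ⟨_, Classical.epsilon_spec (exists_pairSum_eq_one π h hκ hy), sum_sq_flipPair _ _ _⟩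

end PairFlip

def parity (ν : ℕ) : ZMod (2 ^ (ν + 1)) →+* ZMod 2 :=
  ZMod.castHom (dvd_pow_self 2 ν.succ_ne_zero) _

lemma two_pow_mul_of_parity_eq_one {ν : ℕ} {s : ZMod (2 ^ (ν + 1))} (hs : parity ν s = 1) :
    2 ^ ν * s = 2 ^ ν := by
  rw [← ZMod.natCast_zmod_val s] at hs ⊢
  rw [map_natCast, ZMod.natCast_eq_one_iff_odd] at hs
  obtain ⟨t, ht⟩ := hs
  rw [ht]
  push_cast
  linear_combination (t : ZMod (2 ^ (ν + 1))) * ZMod.two_pow_eq_zero (ν + 1)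

lemma parity_intCast_of_odd {ν : ℕ} {n : ℤ} (hn : Odd n) : parity ν n = 1 := by
  rw [map_intCast, hn.intCast_zmod_two]

lemma sqCount_add_two_pow_succ {κ : Type*} [Fintype κ] [DecidableEq κ] [Nonempty κ]
    (hκ : Even (Fintype.card κ)) {n : ℤ} (hn : Odd n) (ν : ℕ) :
    sqCount (κ × Fin 2) (ν + 2) (n + 2 ^ (ν + 1)) = sqCount (κ × Fin 2) (ν + 2) n := by
  set Φ := flipOddPair (κ := κ) (parity (ν + 1)) (2 ^ ν : ZMod (2 ^ (ν + 2)))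
  have hΦ : ∀ y : κ × Fin 2 → ZMod (2 ^ (ν + 2)),
      (∑ i, y i ^ 2 = n ∨ ∑ i, y i ^ 2 = n + 2 ^ (ν + 1)) →
        ∑ i, Φ y i ^ 2 = ∑ i, y i ^ 2 + 2 ^ (ν + 1) := by
    intro y hy
    have hodd : parity (ν + 1) (∑ i, y i ^ 2) = 1 := by
      rcases hy with hy | hy <;> rw [hy]
      · exact parity_intCast_of_odd hn
      · rw [map_add, parity_intCast_of_odd hn, map_pow, map_ofNat,
          show (2 : ZMod 2) = 0 from rfl, zero_pow ν.succ_ne_zero, add_zero]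
    obtain ⟨s, hs, hsum⟩ := sum_sq_flipOddPair _ _ hκ hodd
    rw [hsum, ← two_pow_mul_of_parity_eq_one hs]
    ring
  have hinv : Involutive Φ := flipOddPair_involutive _ _
  refine Nat.card_congr ((hinv.toPerm Φ).subtypeEquiv fun y => ⟨fun hy => ?_, fun hy => ?_⟩)
  · push_cast at hy
    rw [Involutive.coe_toPerm, hΦ y (Or.inr hy), hy]
    linear_combination ZMod.two_pow_eq_zero (ν + 2)
  · rw [Involutive.coe_toPerm] at hy
    rw [← hinv y, hΦ _ (Or.inl hy), hy]
    push_cast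
    rfl

lemma sqCount_add_two_pow {κ : Type*} [Fintype κ] [DecidableEq κ] [Nonempty κ]
    (hκ : Even (Fintype.card κ)) {n : ℤ} (hn : Odd n) :
    ∀ ν, sqCount (κ × Fin 2) (ν + 1) (n + 2 ^ ν) = sqCount (κ × Fin 2) (ν + 1) n
  | 0 => by simpa using sqCount_one_add_one (κ × Fin 2) n
  | ν + 1 => sqCount_add_two_pow_succ hκ hn ν

theorem sqCount_mul_two_pow {κ : Type*} [Fintype κ] [DecidableEq κ] [Nonempty κ]
    (hκ : Even (Fintype.card κ)) {n : ℤ} (hn : Odd n) (ν : ℕ) :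
    sqCount (κ × Fin 2) ν n * 2 ^ ν = Nat.card (κ × Fin 2 → ZMod (2 ^ ν)) := by
  induction ν with
  | zero =>
    have : Subsingleton (ZMod (2 ^ 0)) := ZMod.subsingleton_iff.2 (pow_zero 2)
    rw [pow_zero, mul_one, sqCount]
    exact Nat.card_congr (Equiv.subtypeUnivEquiv fun _ => Subsingleton.elim _ _)
  | succ ν ih =>
    have hsplit := sqCount_succ_add_sqCount_succ (κ × Fin 2) ν n
    rw [sqCount_add_two_pow hκ hn] at hsplit
    calc sqCount (κ × Fin 2) (ν + 1) n * 2 ^ (ν + 1)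
        = (sqCount (κ × Fin 2) (ν + 1) n + sqCount (κ × Fin 2) (ν + 1) n) * 2 ^ ν := by ring
      _ = sqCount (κ × Fin 2) ν n * 2 ^ ν * Nat.card (reduceModPi (κ × Fin 2) ν).ker := by
        rw [hsplit]; ring
      _ = _ := by rw [ih, card_pi_zmod_two_pow_succ]

theorem count_sum_of_squares_4m_mod_two_pow_general (m : ℕ) (hm : 0 < m) (n : ℤ) (hn : Odd n)
    (ν : ℕ) :
    Nat.card {x : Fin (4 * m) → ZMod (2 ^ ν) // ∑ i, (x i) ^ 2 = (n : ZMod (2 ^ ν))} =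
      2 ^ (ν * (4 * m - 1)) := by
  have : Nonempty (Fin (2 * m)) := ⟨⟨0, by omega⟩⟩
  have key := sqCount_mul_two_pow (κ := Fin (2 * m)) (by simp) hn ν
  rw [sqCount_congr (finProdFinEquiv.trans (finCongr (by ring : 2 * m * 2 = 4 * m)))] at key
  rw [Nat.card_fun, Nat.card_zmod, Nat.card_prod, Nat.card_fin, Nat.card_fin, ← pow_mul] at key
  have hexp : ν * (2 * m * 2) = ν * (4 * m - 1) + ν := by
    rw [← Nat.mul_add_one, Nat.sub_add_cancel (by omega)]
    ring
  rw [hexp, pow_add] at key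
  exact Nat.eq_of_mul_eq_mul_right (pow_pos two_pos ν) key

theorem count_sum_of_squares_4m_mod_two_pow (m : ℕ) (hm : 0 < m) (n : ℤ) (hn : Odd n)
    (ν : ℕ) (hν : 1 ≤ ν) :
    Nat.card {x : Fin (4 * m) → ZMod (2 ^ ν) // ∑ i, (x i) ^ 2 = (n : ZMod (2 ^ ν))} =
      2 ^ (ν * (4 * m - 1)) :=
  count_sum_of_squares_4m_mod_two_pow_general m hm n hn ν
end

section
/- For every positive integer r, the number of solutions of x² - y² ≡ 1 (mod r) in (ℤ/rℤ)² equals φ(2r), where φ is Euler's totient function. -/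
/-!
With `u = x + y`, the equation `x² - y² = 1` says that `u` is a unit with `x - y = u⁻¹`, so a
solution is a unit `u` together with an `x` such that `2x = u + u⁻¹`. Every unit of `ℤ/r` is
represented by an odd integer, so `u + u⁻¹` is always a double, and the number of its halves is
the size of the kernel of doubling on the cyclic group `ℤ/r`, namely `gcd(r, 2)`. The count is
therefore `φ(r) · gcd(r, 2) = φ(2r)`.
-/

theorem AddMonoidHom.card_preimage_singleton_of_mem_range {A B : Type*} [AddGroup A]
    [AddGroup B] (f : A →+ B) {b : B} (hb : b ∈ f.range) :
    Nat.card (f ⁻¹' {b}) = Nat.card f.ker := by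
  obtain ⟨a, rfl⟩ := hb
  exact Nat.card_congr (f.fiberEquivKer a)

def sqSubSqEqOneEquiv (R : Type*) [CommRing R] :
    {q : R × R // q.1 ^ 2 - q.2 ^ 2 = 1} ≃
      Σ u : Rˣ, (nsmulAddMonoidHom 2 : R →+ R) ⁻¹' {(u : R) + ↑u⁻¹} where
  toFun q :=
    ⟨⟨q.1.1 + q.1.2, q.1.1 - q.1.2, by linear_combination q.2, by linear_combination q.2⟩,
      q.1.1, show 2 • q.1.1 = (q.1.1 + q.1.2) + (q.1.1 - q.1.2) by rw [two_nsmul]; ring⟩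
  invFun p := ⟨(p.2, p.1 - p.2), by
    have hx : 2 * (p.2 : R) = p.1 + ↑p.1⁻¹ := by rw [two_mul, ← two_nsmul]; exact p.2.2
    linear_combination (p.1 : R) * hx + p.1.mul_inv⟩
  left_inv q := by ext <;> simp
  right_inv p := Sigma.subtype_ext (Units.ext (by simp)) rfl

theorem ZMod.exists_two_mul_add_one_eq {r : ℕ} [NeZero r] (u : (ZMod r)ˣ) :
    ∃ k : ZMod r, 2 * k + 1 = u := by
  have hcop := ZMod.val_coe_unit_coprime u
  obtain ⟨m, ⟨k, rfl⟩, hm⟩ : ∃ m : ℕ, Odd m ∧ (m : ZMod r) = u := by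
    rcases Nat.even_or_odd (u : ZMod r).val with hu | hu
    · have hr : Odd r :=
        Nat.coprime_two_left.mp (hcop.coprime_dvd_left (even_iff_two_dvd.mp hu))
      exact ⟨_ + r, hu.add_odd hr, by simp⟩
    · exact ⟨_, hu, ZMod.natCast_zmod_val _⟩
  exact ⟨k, by rw [← hm]; push_cast; rfl⟩

theorem ZMod.units_add_inv_mem_range_two_nsmul {r : ℕ} [NeZero r] (u : (ZMod r)ˣ) :
    (u : ZMod r) + ↑u⁻¹ ∈ (nsmulAddMonoidHom 2 : ZMod r →+ ZMod r).range := by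
  obtain ⟨a, ha⟩ := ZMod.exists_two_mul_add_one_eq u
  obtain ⟨b, hb⟩ := ZMod.exists_two_mul_add_one_eq u⁻¹
  exact ⟨a + b + 1, by rw [← ha, ← hb, nsmulAddMonoidHom_apply, two_nsmul]; ring⟩

theorem Nat.totient_two_mul (n : ℕ) : Nat.totient (2 * n) = Nat.totient n * n.gcd 2 := by
  rcases Nat.even_or_odd n with hn | hn
  · rw [totient_two_mul_of_even hn, Nat.gcd_eq_right (even_iff_two_dvd.mp hn), mul_comm]
  · rw [totient_two_mul_of_odd hn, Nat.Coprime.gcd_eq_one (Nat.coprime_two_right.mpr hn), mul_one]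

theorem count_x2_sub_y2_eq_one (r : ℕ) (hr : 0 < r) :
    Nat.card {q : ZMod r × ZMod r // q.1 ^ 2 - q.2 ^ 2 = 1} = Nat.totient (2 * r) := by
  have : NeZero r := ⟨hr.ne'⟩
  rw [Nat.card_congr (sqSubSqEqOneEquiv (ZMod r)), Nat.card_sigma]
  simp_rw [AddMonoidHom.card_preimage_singleton_of_mem_range _
      (ZMod.units_add_inv_mem_range_two_nsmul _),
    IsAddCyclic.card_nsmulAddMonoidHom_ker, Nat.card_zmod]
  rw [Finset.sum_const, Finset.card_univ, ZMod.card_units_eq_totient, smul_eq_mul,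
    Nat.totient_two_mul]
end
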